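/- arXiv:math/0204134 — 19 statements merged into one kernel-verified Lean document; each statement's English description precedes it below -/
import Mathlib

section
/- Every strong J-space is a J-space. -/
/-- A Hausdorff space `X` is a *J-space* if whenever `A`, `B` are closed sets with
`A ∪ B = X` and `A ∩ B` compact, then `A` or `B` is compact. -/
def IsJSpace (X : Type*) [TopologicalSpace X] : Prop :=
  ∀ A B : Set X, IsClosed A → IsClosed B → A ∪ B = Set.univ →
    IsCompact (A ∩ B) → IsCompact A ∨ IsCompact B

/-- A Hausdorff space `X` is a *strong J-space* if every compact `K ⊆ X` is contained in
a compact `L ⊆ X` with `X \ L` connected (the empty set counting as connected). -/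
def IsStrongJSpace (X : Type*) [TopologicalSpace X] : Prop :=
  ∀ K : Set X, IsCompact K → ∃ L : Set X, IsCompact L ∧ K ⊆ L ∧ IsPreconnected Lᶜ

/-- Every strong J-space is a J-space. -/
theorem every_strongJSpace_isJSpace (X : Type*) [TopologicalSpace X] [T2Space X]
    (h : IsStrongJSpace X) : IsJSpace X := by
  intro A B hA hB hAB hK
  obtain ⟨L, hL, hKL, hconn⟩ := h (A ∩ B) hK
  -- Lᶜ ⊆ Aᶜ ∪ Bᶜ
  have hcov : Lᶜ ⊆ Aᶜ ∪ Bᶜ := by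
    intro x hx
    by_contra hx'
    simp only [Set.mem_union, Set.mem_compl_iff, not_or, not_not] at hx'
    exact hx (hKL ⟨hx'.1, hx'.2⟩)
  have hdisj : Lᶜ ∩ (Aᶜ ∩ Bᶜ) = ∅ := by
    ext x
    simp only [Set.mem_inter_iff, Set.mem_compl_iff, Set.mem_empty_iff_false, iff_false]
    rintro ⟨-, hxa, hxb⟩
    have := hAB ▸ Set.mem_univ x
    rcases this with hx | hx
    · exact hxa hx
    · exact hxb hx
  have key : (Lᶜ ∩ Aᶜ = ∅) ∨ (Lᶜ ∩ Bᶜ = ∅) := by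
    by_contra hc
    push_neg at hc
    obtain ⟨h1, h2⟩ := hc
    obtain ⟨x, hx⟩ := h1
    obtain ⟨y, hy⟩ := h2
    have := hconn Aᶜ Bᶜ hA.isOpen_compl hB.isOpen_compl hcov ⟨x, hx⟩ ⟨y, hy⟩
    rw [hdisj] at this
    exact Set.not_nonempty_empty this
  have hLclosed : IsClosed L := hL.isClosed
  rcases key with he | he
  · -- Lᶜ ⊆ A, so B ⊆ L
    right
    have hBL : B ⊆ L := by
      intro x hxB
      by_contra hxL
      have hxA : x ∈ A := by
        simp [Set.eq_empty_iff_forall_notMem] at he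
        exact he x hxL
      exact hxL (hKL ⟨hxA, hxB⟩)
    exact hL.of_isClosed_subset hB hBL
  · left
    have hAL : A ⊆ L := by
      intro x hxA
      by_contra hxL
      have hxB : x ∈ B := by
        simp [Set.eq_empty_iff_forall_notMem] at he
        exact he x hxL
      exact hxL (hKL ⟨hxA, hxB⟩)
    exact hL.of_isClosed_subset hA hAL
end

section
/- If X is a locally connected Hausdorff space, then X is a J-space if and only if X is a strong J-space. -/
open Set

section JSpaceAux

variable {X : Type*} [TopologicalSpace X] [T2Space X] [LocallyConnectedSpace X]
variable {K : Set X}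

/-- The connected components of the complement of `K`. -/
def JSpaceComps (K : Set X) : Set (Set X) :=
  {c | ∃ x ∈ Kᶜ, connectedComponentIn Kᶜ x = c}

lemma jcomps_open (hK : IsCompact K) {c : Set X} (hc : c ∈ JSpaceComps K) : IsOpen c := by
  obtain ⟨x, -, rfl⟩ := hc
  exact hK.isClosed.isOpen_compl.connectedComponentIn

lemma jcomps_subset {c : Set X} (hc : c ∈ JSpaceComps K) : c ⊆ Kᶜ := by
  obtain ⟨x, -, rfl⟩ := hc
  exact connectedComponentIn_subset _ _

lemma jcomps_eq_of_mem {c c' : Set X} (hc : c ∈ JSpaceComps K) (hc' : c' ∈ JSpaceComps K)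
    {z : X} (hz : z ∈ c) (hz' : z ∈ c') : c = c' := by
  obtain ⟨x, -, rfl⟩ := hc
  obtain ⟨y, -, rfl⟩ := hc'
  rw [connectedComponentIn_eq hz, connectedComponentIn_eq hz']

lemma jcomps_closure_subset (hK : IsCompact K) {c : Set X} (hc : c ∈ JSpaceComps K) :
    closure c ⊆ c ∪ K := by
  intro y hy
  by_cases hyK : y ∈ K
  · exact Or.inr hyK
  · left
    set c' := connectedComponentIn Kᶜ y with hc'def
    have hc' : c' ∈ JSpaceComps K := ⟨y, hyK, rfl⟩
    have hyc' : y ∈ c' := mem_connectedComponentIn hyK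
    obtain ⟨z, hzc', hzc⟩ := mem_closure_iff.mp hy c' (jcomps_open hK hc') hyc'
    rwa [jcomps_eq_of_mem hc' hc hzc' hzc] at hyc'

/-- `K` together with the union of any family of components of `Kᶜ` is closed. -/
lemma jcomps_isClosed_union (hK : IsCompact K) {S : Set (Set X)} (hS : S ⊆ JSpaceComps K) :
    IsClosed (K ∪ ⋃₀ S) := by
  rw [← isOpen_compl_iff]
  rw [isOpen_iff_forall_mem_open]
  intro x hx
  have hxK : x ∉ K := fun h => hx (Or.inl h)
  have hxS : x ∉ ⋃₀ S := fun h => hx (Or.inr h)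
  refine ⟨connectedComponentIn Kᶜ x, ?_, jcomps_open hK ⟨x, hxK, rfl⟩,
    mem_connectedComponentIn hxK⟩
  intro z hz
  simp only [mem_compl_iff, mem_union, not_or]
  constructor
  · exact jcomps_subset ⟨x, hxK, rfl⟩ hz
  · rintro ⟨c', hc'S, hzc'⟩
    apply hxS
    have : connectedComponentIn Kᶜ x = c' :=
      jcomps_eq_of_mem ⟨x, hxK, rfl⟩ (hS hc'S) hz hzc'
    exact ⟨c', hc'S, this ▸ mem_connectedComponentIn hxK⟩

/-- If `K ∪ ⋃₀ T` is compact and `V ⊇ K` is open, then only finitely many components in `T`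
escape `V`. -/
lemma jcomps_finite_escape (hK : IsCompact K) {V : Set X} (hV : IsOpen V) (hKV : K ⊆ V)
    {T : Set (Set X)} (hT : T ⊆ JSpaceComps K) (hcpt : IsCompact (K ∪ ⋃₀ T)) :
    {c | c ∈ T ∧ ¬ c ⊆ V}.Finite := by
  rcases T.eq_empty_or_nonempty with rfl | ⟨c₀, hc₀⟩
  · simp
  · have hcover : K ∪ ⋃₀ T ⊆ ⋃ c : T, ((c : Set X) ∪ V) := by
      rintro y (hy | ⟨c, hcT, hyc⟩)
      · exact mem_iUnion.mpr ⟨⟨c₀, hc₀⟩, Or.inr (hKV hy)⟩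
      · exact mem_iUnion.mpr ⟨⟨c, hcT⟩, Or.inl hyc⟩
    obtain ⟨u, hu⟩ := hcpt.elim_finite_subcover (fun c : T => (c : Set X) ∪ V)
      (fun c => (jcomps_open hK (hT c.2)).union hV) hcover
    refine Set.Finite.subset (u.finite_toSet.image Subtype.val) ?_
    rintro c ⟨hcT, hcV⟩
    obtain ⟨y, hyc, hyV⟩ := not_subset.mp hcV
    have hyM : y ∈ K ∪ ⋃₀ T := Or.inr ⟨c, hcT, hyc⟩
    have := hu hyM
    simp only [mem_iUnion] at this
    obtain ⟨c', hc'u, hyc'⟩ := this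
    rcases hyc' with hyc' | hyV'
    · have hcc' : c = (c' : Set X) := jcomps_eq_of_mem (hT hcT) (hT c'.2) hyc hyc'
      exact ⟨c', hc'u, hcc'.symm⟩
    · exact absurd hyV' hyV

/-- In a locally connected Hausdorff J-space, if all components of the complement of a compact
set `K` have compact closure, then the whole space is compact. -/
lemma jcomps_compact_univ (hJ : IsJSpace X) (hK : IsCompact K)
    (hall : ∀ c ∈ JSpaceComps K, IsCompact (closure c)) : IsCompact (univ : Set X) := by
  classical
  refine isCompact_of_finite_subcover fun {ι} U hU hcover => ?_
  obtain ⟨t₀, ht₀⟩ := hK.elim_finite_subcover U hU ((subset_univ K).trans hcover)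
  set V := ⋃ i ∈ t₀, U i with hVdef
  have hVopen : IsOpen V := isOpen_biUnion fun i _ => hU i
  set bad := {c | c ∈ JSpaceComps K ∧ ¬ c ⊆ V} with hbaddef
  -- `bad` is finite
  have hbadfin : bad.Finite := by
    by_contra hfin'
    have hfin : bad.Infinite := hfin'
    set f := Set.Infinite.natEmbedding bad hfin with hfdef
    set T₁ : Set (Set X) := Set.range (fun n => ((f (2 * n) : bad) : Set X)) with hT₁def
    set T₂ : Set (Set X) := Set.range (fun n => ((f (2 * n + 1) : bad) : Set X)) with hT₂def
    have hinj : ∀ a b : ℕ, ((f a : bad) : Set X) = ((f b : bad) : Set X) → a = b := by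
      intro a b h
      exact f.injective (Subtype.coe_injective h)
    have hT₁bad : T₁ ⊆ bad := by rintro _ ⟨n, rfl⟩; exact (f (2 * n)).2
    have hT₂bad : T₂ ⊆ bad := by rintro _ ⟨n, rfl⟩; exact (f (2 * n + 1)).2
    have hT₁comps : T₁ ⊆ JSpaceComps K := fun c hc => (hT₁bad hc).1
    have hT₂comps : T₂ ⊆ JSpaceComps K := fun c hc => (hT₂bad hc).1
    have hT₁inf : T₁.Infinite := by
      apply Set.infinite_range_of_injective
      intro a b h
      have := hinj _ _ h
      omega
    have hT₂inf : T₂.Infinite := by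
      apply Set.infinite_range_of_injective
      intro a b h
      have := hinj _ _ h
      omega
    have hT₂notT₁ : ∀ c ∈ T₂, c ∉ T₁ := by
      rintro _ ⟨n, rfl⟩ ⟨m, hm⟩
      have := hinj _ _ hm
      omega
    -- apply the J-space property to `K ∪ ⋃₀ T₁` and `K ∪ ⋃₀ (comps \ T₁)`
    have hAclosed : IsClosed (K ∪ ⋃₀ T₁) := jcomps_isClosed_union hK hT₁comps
    have hBclosed : IsClosed (K ∪ ⋃₀ (JSpaceComps K \ T₁)) :=
      jcomps_isClosed_union hK diff_subset
    have hABunion : (K ∪ ⋃₀ T₁) ∪ (K ∪ ⋃₀ (JSpaceComps K \ T₁)) = univ := by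
      rw [eq_univ_iff_forall]
      intro x
      by_cases hxK : x ∈ K
      · exact Or.inl (Or.inl hxK)
      · have hc : connectedComponentIn Kᶜ x ∈ JSpaceComps K := ⟨x, hxK, rfl⟩
        have hxc : x ∈ connectedComponentIn Kᶜ x := mem_connectedComponentIn hxK
        by_cases hcT : connectedComponentIn Kᶜ x ∈ T₁
        · exact Or.inl (Or.inr ⟨_, hcT, hxc⟩)
        · exact Or.inr (Or.inr ⟨_, ⟨hc, hcT⟩, hxc⟩)
    have hABinter : IsCompact ((K ∪ ⋃₀ T₁) ∩ (K ∪ ⋃₀ (JSpaceComps K \ T₁))) := by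
      apply hK.of_isClosed_subset (hAclosed.inter hBclosed)
      rintro x ⟨hxA, hxB⟩
      rcases hxA with hxK | ⟨c, hcT, hxc⟩
      · exact hxK
      · rcases hxB with hxK | ⟨c', ⟨hc'comps, hc'T⟩, hxc'⟩
        · exact hxK
        · exact absurd ((jcomps_eq_of_mem (hT₁comps hcT) hc'comps hxc hxc') ▸ hcT) hc'T
    rcases hJ _ _ hAclosed hBclosed hABunion hABinter with h1 | h2
    · have hfin1 := jcomps_finite_escape hK hVopen ht₀ hT₁comps h1
      have : T₁ ⊆ {c | c ∈ T₁ ∧ ¬ c ⊆ V} := fun c hc => ⟨hc, (hT₁bad hc).2⟩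
      exact hT₁inf (hfin1.subset this)
    · have hT₂sub : T₂ ⊆ JSpaceComps K \ T₁ := fun c hc => ⟨hT₂comps hc, hT₂notT₁ c hc⟩
      have hT₂cpt : IsCompact (K ∪ ⋃₀ T₂) := by
        apply h2.of_isClosed_subset (jcomps_isClosed_union hK hT₂comps)
        exact union_subset_union_right K (sUnion_mono hT₂sub)
      have hfin2 := jcomps_finite_escape hK hVopen ht₀ hT₂comps hT₂cpt
      have : T₂ ⊆ {c | c ∈ T₂ ∧ ¬ c ⊆ V} := fun c hc => ⟨hc, (hT₂bad hc).2⟩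
      exact hT₂inf (hfin2.subset this)
  -- assemble the finite subcover
  have hex : ∀ c ∈ bad, ∃ t : Finset ι, closure c ⊆ ⋃ i ∈ t, U i := fun c hc =>
    (hall c hc.1).elim_finite_subcover U hU ((subset_univ _).trans hcover)
  set g : Set X → Finset ι := fun c => if h : c ∈ bad then (hex c h).choose else ∅ with hgdef
  refine ⟨t₀ ∪ hbadfin.toFinset.biUnion g, ?_⟩
  intro x _
  by_cases hxK : x ∈ K
  · obtain ⟨i, hi, hxi⟩ := mem_iUnion₂.mp (ht₀ hxK)
    exact mem_iUnion₂.mpr ⟨i, Finset.mem_union_left _ hi, hxi⟩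
  · have hc : connectedComponentIn Kᶜ x ∈ JSpaceComps K := ⟨x, hxK, rfl⟩
    have hxc : x ∈ connectedComponentIn Kᶜ x := mem_connectedComponentIn hxK
    by_cases hcV : connectedComponentIn Kᶜ x ⊆ V
    · obtain ⟨i, hi, hxi⟩ := mem_iUnion₂.mp (hcV hxc)
      exact mem_iUnion₂.mpr ⟨i, Finset.mem_union_left _ hi, hxi⟩
    · have hcbad : connectedComponentIn Kᶜ x ∈ bad := ⟨hc, hcV⟩
      have hgc : closure (connectedComponentIn Kᶜ x) ⊆ ⋃ i ∈ g (connectedComponentIn Kᶜ x), U i := by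
        simp only [hgdef, dif_pos hcbad]
        exact (hex _ hcbad).choose_spec
      obtain ⟨i, hi, hxi⟩ := mem_iUnion₂.mp (hgc (subset_closure hxc))
      refine mem_iUnion₂.mpr ⟨i, Finset.mem_union_right _ ?_, hxi⟩
      exact Finset.mem_biUnion.mpr ⟨_, hbadfin.mem_toFinset.mpr hcbad, hi⟩

end JSpaceAux

/-- For locally connected Hausdorff spaces, the notions of J-space and strong J-space
coincide. -/
theorem isJSpace_iff_isStrongJSpace_of_locallyConnected (X : Type*) [TopologicalSpace X]
    [T2Space X] [LocallyConnectedSpace X] : IsJSpace X ↔ IsStrongJSpace X := by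
  constructor
  · -- J-space → strong J-space
    intro hJ K hK
    by_cases hall : ∀ c ∈ JSpaceComps K, IsCompact (closure c)
    · exact ⟨Set.univ, jcomps_compact_univ hJ hK hall, Set.subset_univ K, by
        rw [Set.compl_univ]; exact isPreconnected_empty⟩
    · push_neg at hall
      obtain ⟨c₀, hc₀, hnc⟩ := hall
      have hc₀open : IsOpen c₀ := jcomps_open hK hc₀
      have huniv : c₀ᶜ ∪ closure c₀ = Set.univ := by
        rw [Set.eq_univ_iff_forall]
        intro x
        by_cases hx : x ∈ c₀
        · exact Or.inr (subset_closure hx)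
        · exact Or.inl hx
      have hinter : IsCompact (c₀ᶜ ∩ closure c₀) := by
        apply hK.of_isClosed_subset (hc₀open.isClosed_compl.inter isClosed_closure)
        rintro x ⟨hx1, hx2⟩
        rcases jcomps_closure_subset hK hc₀ hx2 with h | h
        · exact absurd h hx1
        · exact h
      have hLcpt : IsCompact c₀ᶜ := by
        rcases hJ c₀ᶜ (closure c₀) hc₀open.isClosed_compl isClosed_closure huniv hinter with
          h | h
        · exact h
        · exact absurd h hnc
      refine ⟨c₀ᶜ, hLcpt, ?_, ?_⟩
      · intro x hx
        exact fun hxc => (jcomps_subset hc₀ hxc) hx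
      · rw [compl_compl]
        obtain ⟨x, -, rfl⟩ := hc₀
        exact isPreconnected_connectedComponentIn
  · -- strong J-space → J-space
    intro hS A B hA hB hAB hi
    obtain ⟨L, hL, hKL, hconn⟩ := hS (A ∩ B) hi
    have hsub : Lᶜ ⊆ Aᶜ ∪ Bᶜ := by
      rw [← Set.compl_inter]
      exact Set.compl_subset_compl.mpr hKL
    have hdis : Disjoint Aᶜ Bᶜ := by
      rw [Set.disjoint_iff_inter_eq_empty, ← Set.compl_union, hAB, Set.compl_univ]
    rcases hconn.subset_or_subset hA.isOpen_compl hB.isOpen_compl hdis hsub with h | h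
    · exact Or.inl (hL.of_isClosed_subset hA (Set.compl_subset_compl.mp h))
    · exact Or.inr (hL.of_isClosed_subset hB (Set.compl_subset_compl.mp h))
end

section
/- Let X be a Hausdorff topological vector space over ℝ. Then the following are equivalent: (a) X is a J-space; (b) X is a strong J-space; (c) X is not isomorphic to ℝ as a topological vector space (i.e., there is no linear homeomorphism from X onto ℝ). -/
open Set Module

section Aux

variable {X : Type*} [AddCommGroup X] [Module ℝ X] [TopologicalSpace X]
    [IsTopologicalAddGroup X] [ContinuousSMul ℝ X] [T2Space X]

/-- A compact set `L` eventually misses every dilate of a compact set `S` avoiding `0`. -/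
private lemma aux_absorb {L S : Set X} (hL : IsCompact L) (hS : IsCompact S)
    (h0 : (0 : X) ∉ S) : ∃ T : ℝ, 1 ≤ T ∧ ∀ s ∈ S, T • s ∉ L := by
  have hopen : IsOpen ((fun p : ℝ × X => p.1 • p.2) ⁻¹' Sᶜ) :=
    hS.isClosed.isOpen_compl.preimage continuous_smul
  have hsub : ({0} : Set ℝ) ×ˢ L ⊆ (fun p : ℝ × X => p.1 • p.2) ⁻¹' Sᶜ := by
    rintro ⟨t, x⟩ ⟨ht, -⟩
    have : t = 0 := ht
    subst this
    simpa using h0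
  obtain ⟨u, v, hu, -, h0u, hLv, huv⟩ :=
    generalized_tube_lemma isCompact_singleton hL hopen hsub
  obtain ⟨ε, hε, hball⟩ := Metric.isOpen_iff.1 hu 0 (h0u rfl)
  refine ⟨max 1 (2 / ε), le_max_left _ _, fun s hs hsl => ?_⟩
  set T := max 1 (2 / ε) with hTdef
  have hT0 : (0:ℝ) < T := lt_of_lt_of_le one_pos (le_max_left _ _)
  have hTinv : T⁻¹ ∈ u := by
    apply hball
    rw [Metric.mem_ball, Real.dist_eq, sub_zero, abs_of_pos (inv_pos.2 hT0)]
    have h2ε : 2 / ε ≤ T := le_max_right _ _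
    have h2ε0 : (0:ℝ) < 2 / ε := by positivity
    have hle : T⁻¹ ≤ (2 / ε)⁻¹ := inv_anti₀ h2ε0 h2ε
    have : (2 / ε)⁻¹ = ε / 2 := by
      field_simp
    rw [this] at hle
    linarith
  have hmem := huv (Set.mk_mem_prod hTinv (hLv hsl))
  simp only [Set.mem_preimage] at hmem
  rw [smul_smul, inv_mul_cancel₀ (ne_of_gt hT0), one_smul] at hmem
  exact hmem hs

private lemma aux_joined {s : Set X} {x y : X} (h : segment ℝ x y ⊆ s) : JoinedIn s x y :=
  (((convex_segment x y).isPathConnected ⟨x, left_mem_segment ℝ x y⟩).joinedIn x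
    (left_mem_segment ℝ x y) y (right_mem_segment ℝ x y)).mono h

private lemma aux_isCompact_segment (x y : X) : IsCompact (segment ℝ x y) := by
  rw [segment_eq_image]
  exact isCompact_Icc.image
    (((continuous_const.sub continuous_id).smul continuous_const).add
      (continuous_id.smul continuous_const))

/-- If `0` lies on a segment from a nonzero point `p` to `q`, then `q ∈ span {p}`. -/
private lemma aux_mem_span {p q : X} (hp : p ≠ 0) (h : (0:X) ∈ segment ℝ p q) :
    q ∈ Submodule.span ℝ ({p} : Set X) := by
  obtain ⟨a, b, ha, hb, hab, habs⟩ := h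
  rcases eq_or_ne b 0 with rfl | hbne
  · exfalso
    rw [add_zero] at hab
    subst hab
    rw [zero_smul, add_zero, one_smul] at habs
    exact hp habs
  · refine Submodule.mem_span_singleton.2 ⟨-(a/b), ?_⟩
    apply smul_right_injective X hbne
    show b • (-(a / b) • p) = b • q
    rw [smul_smul]
    have hcoef : b * -(a / b) = -a := by field_simp
    rw [hcoef, neg_smul]
    have : b • q = -(a • p) := eq_neg_of_add_eq_zero_right habs
    exact this.symm

private lemma aux_strong [Nontrivial X]
    (hdim : ∀ x : X, x ≠ 0 → ∃ w : X, w ∉ Submodule.span ℝ ({x} : Set X)) :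
    IsStrongJSpace X := by
  intro K hK
  set L : Set X := (fun p : ℝ × X => p.1 • p.2) '' (Set.Icc (0:ℝ) 1 ×ˢ insert (0:X) K)
    with hLdef
  have hLcomp : IsCompact L :=
    (isCompact_Icc.prod (hK.insert 0)).image continuous_smul
  have hKL : K ⊆ L := fun k hk =>
    ⟨(1, k), ⟨⟨zero_le_one, le_refl 1⟩, Set.mem_insert_iff.2 (Or.inr hk)⟩, one_smul ℝ k⟩
  have h0L : (0:X) ∈ L :=
    ⟨(0, 0), ⟨⟨le_refl 0, zero_le_one⟩, Set.mem_insert _ _⟩, zero_smul ℝ (0:X)⟩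
  have hstar : ∀ t : ℝ, t ∈ Set.Icc (0:ℝ) 1 → ∀ z ∈ L, t • z ∈ L := by
    rintro t ht z ⟨⟨s, k⟩, ⟨hs, hk⟩, rfl⟩
    obtain ⟨ht1, ht2⟩ := Set.mem_Icc.1 ht
    obtain ⟨hs1, hs2⟩ := Set.mem_Icc.1 hs
    have hle : t * s ≤ 1 := by nlinarith [mul_le_mul ht2 hs2 hs1 (zero_le_one (α := ℝ))]
    exact ⟨(t * s, k), ⟨Set.mem_Icc.2 ⟨mul_nonneg ht1 hs1, hle⟩, hk⟩, (smul_smul t s k).symm⟩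
  have hray : ∀ x : X, x ∉ L → ∀ c : ℝ, 1 ≤ c → c • x ∉ L := by
    intro x hx c hc hmem
    have hc0 : (0:ℝ) < c := lt_of_lt_of_le one_pos hc
    have h1 : c⁻¹ ∈ Set.Icc (0:ℝ) 1 := by
      constructor
      · positivity
      · rw [← one_div]
        exact (div_le_one hc0).2 hc
    have := hstar c⁻¹ h1 _ hmem
    rw [smul_smul, inv_mul_cancel₀ (ne_of_gt hc0), one_smul] at this
    exact hx this
  have hx0 : ∀ x : X, x ∉ L → x ≠ 0 := fun x hx h => hx (h ▸ h0L)
  have hseg_ray : ∀ x : X, x ∉ L → ∀ T : ℝ, 1 ≤ T → segment ℝ x (T • x) ⊆ Lᶜ := by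
    rintro x hx T hT z ⟨a, b, ha, hb, hab, rfl⟩
    have heq : a • x + b • (T • x) = (a + b * T) • x := by
      rw [smul_smul, ← add_smul]
    rw [heq]
    exact hray x hx _ (by nlinarith)
  have hjoin_seg : ∀ x y : X, x ∉ L → y ∉ L → (0:X) ∉ segment ℝ x y → JoinedIn Lᶜ x y := by
    intro x y hx hy h0seg
    obtain ⟨T, hT1, hT⟩ := aux_absorb hLcomp (aux_isCompact_segment x y) h0seg
    have leg1 : JoinedIn Lᶜ x (T • x) := aux_joined (hseg_ray x hx T hT1)
    have leg3 : JoinedIn Lᶜ y (T • y) := aux_joined (hseg_ray y hy T hT1)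
    have leg2 : JoinedIn Lᶜ (T • x) (T • y) := by
      apply aux_joined
      rintro z ⟨a, b, ha, hb, hab, rfl⟩
      have heq : a • (T • x) + b • (T • y) = T • (a • x + b • y) := by
        rw [smul_comm a T, smul_comm b T, ← smul_add]
      rw [heq]
      exact hT _ ⟨a, b, ha, hb, hab, rfl⟩
    exact leg1.trans (leg2.trans leg3.symm)
  refine ⟨L, hLcomp, hKL, ?_⟩
  obtain ⟨x₀, hx₀⟩ := exists_ne (0:X)
  obtain ⟨T₀, hT₀1, hT₀⟩ := aux_absorb hLcomp isCompact_singleton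
    (by simpa using (Ne.symm hx₀))
  have hne : (T₀ • x₀) ∈ Lᶜ := hT₀ x₀ rfl
  have key : ∀ x ∈ Lᶜ, ∀ y ∈ Lᶜ, JoinedIn Lᶜ x y := by
    intro x hx y hy
    by_cases h0seg : (0:X) ∈ segment ℝ x y
    · have hxne : x ≠ 0 := hx0 x hx
      have hyne : y ≠ 0 := hx0 y hy
      have hyspan : y ∈ Submodule.span ℝ ({x} : Set X) := aux_mem_span hxne h0seg
      obtain ⟨w, hw⟩ := hdim x hxne
      have hwne : w ≠ 0 := fun h => hw (h ▸ Submodule.zero_mem _)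
      obtain ⟨T₁, hT₁1, hT₁⟩ := aux_absorb hLcomp isCompact_singleton
        (by simpa using (Ne.symm hwne))
      have hzL : (T₁ • w) ∉ L := hT₁ w rfl
      have hzspan : (T₁ • w) ∉ Submodule.span ℝ ({x} : Set X) := by
        intro hmem
        apply hw
        have hT₁0 : T₁ ≠ 0 := by positivity
        have hw' : w = T₁⁻¹ • (T₁ • w) := by
          rw [smul_smul, inv_mul_cancel₀ hT₁0, one_smul]
        rw [hw']
        exact Submodule.smul_mem _ _ hmem
      have h1 : (0:X) ∉ segment ℝ x (T₁ • w) := fun h => hzspan (aux_mem_span hxne h)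
      have h2 : (0:X) ∉ segment ℝ y (T₁ • w) := fun h =>
        hzspan ((Submodule.span_singleton_le_iff_mem _ _).2 hyspan (aux_mem_span hyne h))
      exact (hjoin_seg x (T₁ • w) hx hzL h1).trans (hjoin_seg y (T₁ • w) hy hzL h2).symm
    · exact hjoin_seg x y hx hy h0seg
  have hpath : IsPathConnected Lᶜ := ⟨T₀ • x₀, hne, fun _ hy => key _ hne _ hy⟩
  exact hpath.isConnected.isPreconnected

end Aux

/-- A Hausdorff topological vector space over `ℝ` is a J-space iff it is a strong J-space
iff it is not isomorphic (as a topological vector space) to `ℝ`. -/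
theorem tvs_isJSpace_tfae (X : Type*) [AddCommGroup X] [Module ℝ X] [TopologicalSpace X]
    [IsTopologicalAddGroup X] [ContinuousSMul ℝ X] [T2Space X] :
    List.TFAE [IsJSpace X, IsStrongJSpace X, IsEmpty (X ≃L[ℝ] ℝ)] := by
  tfae_have 2 → 1 := by
    intro h A B hA hB hAB hcomp
    obtain ⟨L, hLc, hsubL, hconn⟩ := h _ hcomp
    have hcover : Lᶜ ⊆ Aᶜ ∪ Bᶜ := by
      intro z hz
      rw [← Set.compl_inter]
      exact fun hmem => hz (hsubL hmem)
    have hkey : ¬((Lᶜ ∩ Aᶜ).Nonempty ∧ (Lᶜ ∩ Bᶜ).Nonempty) := by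
      rintro ⟨h1, h2⟩
      obtain ⟨p, hpL, hpA, hpB⟩ := hconn Aᶜ Bᶜ hA.isOpen_compl hB.isOpen_compl hcover h1 h2
      have : p ∈ A ∪ B := hAB ▸ Set.mem_univ p
      rcases this with h | h
      · exact hpA h
      · exact hpB h
    rcases not_and_or.1 hkey with h1 | h2
    · right
      refine hLc.of_isClosed_subset hB fun b hb => ?_
      by_contra hbL
      rcases Classical.em (b ∈ A) with hbA | hbA
      · exact hbL (hsubL ⟨hbA, hb⟩)
      · exact h1 ⟨b, hbL, hbA⟩
    · left
      refine hLc.of_isClosed_subset hA fun a ha => ?_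
      by_contra haL
      rcases Classical.em (a ∈ B) with haB | haB
      · exact haL (hsubL ⟨ha, haB⟩)
      · exact h2 ⟨a, haL, haB⟩
  tfae_have 1 → 3 := by
    intro h
    constructor
    intro e
    have hinter : e ⁻¹' Set.Iic 0 ∩ e ⁻¹' Set.Ici 0 = {e.symm 0} := by
      ext z
      simp only [Set.mem_inter_iff, Set.mem_preimage, Set.mem_Iic, Set.mem_Ici,
        Set.mem_singleton_iff]
      rw [← le_antisymm_iff]
      constructor
      · intro hz
        have := congrArg e.symm hz
        simpa using this
      · rintro rfl
        simp
    rcases h (e ⁻¹' Set.Iic 0) (e ⁻¹' Set.Ici 0) (isClosed_Iic.preimage e.continuous)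
        (isClosed_Ici.preimage e.continuous)
        (by ext z; simpa using le_total (e z) 0)
        (by rw [hinter]; exact isCompact_singleton) with hA | hB
    · have himg : IsCompact (Set.Iic (0:ℝ)) := by
        have := hA.image e.continuous
        rwa [Set.image_preimage_eq _ e.surjective] at this
      exact not_bddBelow_Iic (a := (0:ℝ)) himg.bddBelow
    · have himg : IsCompact (Set.Ici (0:ℝ)) := by
        have := hB.image e.continuous
        rwa [Set.image_preimage_eq _ e.surjective] at this
      exact not_bddAbove_Ici (a := (0:ℝ)) himg.bddAbove
  tfae_have 3 → 2 := by
    intro h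
    rcases subsingleton_or_nontrivial X with hs | hs
    · intro K hK
      exact ⟨Set.univ, isCompact_univ, Set.subset_univ _,
        by rw [Set.compl_univ]; exact isPreconnected_empty⟩
    · apply aux_strong
      intro x hx
      by_contra hcon
      push_neg at hcon
      have hr : finrank ℝ X = 1 :=
        finrank_eq_one x hx fun w => Submodule.mem_span_singleton.1 (hcon w)
      have : FiniteDimensional ℝ X := Module.finite_of_finrank_eq_succ hr
      exact h.elim (ContinuousLinearEquiv.ofFinrankEq (by rw [hr, finrank_self]))
  tfae_finish
end

section
/- If X and Y are connected, non-compact Hausdorff spaces, then the product X × Y is a strong J-space. -/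
/-- The product of two connected, non-compact Hausdorff spaces is a strong J-space. -/
theorem prod_isStrongJSpace_of_connected_noncompact (X Y : Type*)
    [TopologicalSpace X] [T2Space X] [ConnectedSpace X] (hX : ¬CompactSpace X)
    [TopologicalSpace Y] [T2Space Y] [ConnectedSpace Y] (hY : ¬CompactSpace Y) :
    IsStrongJSpace (X × Y) := by
  intro K hK
  set A : Set X := Prod.fst '' K with hA
  set B : Set Y := Prod.snd '' K with hB
  have hAc : IsCompact A := hK.image continuous_fst
  have hBc : IsCompact B := hK.image continuous_snd
  -- pick points outside A and B
  have hx0 : ∃ x0 : X, x0 ∉ A := by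
    by_contra h
    push_neg at h
    exact hX ⟨by simpa [Set.eq_univ_iff_forall.2 h] using hAc⟩
  have hy0 : ∃ y0 : Y, y0 ∉ B := by
    by_contra h
    push_neg at h
    exact hY ⟨by simpa [Set.eq_univ_iff_forall.2 h] using hBc⟩
  obtain ⟨x0, hx0⟩ := hx0
  obtain ⟨y0, hy0⟩ := hy0
  refine ⟨A ×ˢ B, hAc.prod hBc, ?_, ?_⟩
  · intro z hz
    exact ⟨⟨z, hz, rfl⟩, ⟨z, hz, rfl⟩⟩
  · have hbase : (x0, y0) ∈ (A ×ˢ B)ᶜ := by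
      intro h; exact hx0 h.1
    apply isPreconnected_of_forall (x := (x0, y0))
    · intro z hz
      have hz' : z.1 ∉ A ∨ z.2 ∉ B := by
        by_contra h
        push_neg at h
        exact hz ⟨h.1, h.2⟩
      rcases hz' with h | h
      · refine ⟨({z.1} ×ˢ (Set.univ : Set Y)) ∪ ((Set.univ : Set X) ×ˢ {y0}), ?_, ?_, ?_, ?_⟩
        · rintro ⟨a, b⟩ (⟨ha, -⟩ | ⟨-, hb⟩)
          · intro hm; obtain rfl := Set.mem_singleton_iff.1 ha; exact h hm.1
          · intro hm; obtain rfl := Set.mem_singleton_iff.1 hb; exact hy0 hm.2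
        · exact Or.inr ⟨Set.mem_univ _, rfl⟩
        · exact Or.inl ⟨rfl, Set.mem_univ _⟩
        · apply IsPreconnected.union (z.1, y0)
          · exact ⟨rfl, Set.mem_univ _⟩
          · exact ⟨Set.mem_univ _, rfl⟩
          · exact isPreconnected_singleton.prod isPreconnected_univ
          · exact isPreconnected_univ.prod isPreconnected_singleton
      · refine ⟨((Set.univ : Set X) ×ˢ {z.2}) ∪ ({x0} ×ˢ (Set.univ : Set Y)), ?_, ?_, ?_, ?_⟩
        · rintro ⟨a, b⟩ (⟨-, hb⟩ | ⟨ha, -⟩)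
          · intro hm; obtain rfl := Set.mem_singleton_iff.1 hb; exact h hm.2
          · intro hm; obtain rfl := Set.mem_singleton_iff.1 ha; exact hx0 hm.1
        · exact Or.inr ⟨rfl, Set.mem_univ _⟩
        · exact Or.inl ⟨Set.mem_univ _, rfl⟩
        · apply IsPreconnected.union (x0, z.2)
          · exact ⟨Set.mem_univ _, rfl⟩
          · exact ⟨rfl, Set.mem_univ _⟩
          · exact isPreconnected_univ.prod isPreconnected_singleton
          · exact isPreconnected_singleton.prod isPreconnected_univ
end

section
/- A Hausdorff space X is a J-space if and only if every boundary-perfect map f : X → Y onto a non-compact Hausdorff space Y is perfect. -/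
/-- A map is *perfect* if it is closed and all fibers are compact. -/
def IsPerfectMap {X Y : Type*} [TopologicalSpace X] [TopologicalSpace Y] (f : X → Y) : Prop :=
  IsClosedMap f ∧ ∀ y : Y, IsCompact (f ⁻¹' {y})

/-- A map is *boundary-perfect* if it is closed and the topological boundary of each
fiber is compact. -/
def IsBoundaryPerfectMap {X Y : Type*} [TopologicalSpace X] [TopologicalSpace Y]
    (f : X → Y) : Prop :=
  IsClosedMap f ∧ ∀ y : Y, IsCompact (frontier (f ⁻¹' {y}))

/-- The setoid collapsing a set `A` to a single point. -/
def jSetoid {X : Type u} (A : Set X) : Setoid X where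
  r x y := x = y ∨ (x ∈ A ∧ y ∈ A)
  iseqv := by
    refine ⟨fun x => Or.inl rfl, ?_, ?_⟩
    · rintro x y (rfl | ⟨hx, hy⟩)
      · exact Or.inl rfl
      · exact Or.inr ⟨hy, hx⟩
    · rintro x y z (rfl | ⟨hx, hy⟩) (rfl | ⟨hy', hz⟩)
      · exact Or.inl rfl
      · exact Or.inr ⟨hy', hz⟩
      · exact Or.inr ⟨hx, hy⟩
      · exact Or.inr ⟨hx, hz⟩

theorem jSetoid_rel {X : Type u} (A : Set X) (x y : X) :
    (jSetoid A).r x y ↔ (x = y ∨ (x ∈ A ∧ y ∈ A)) := Iff.rfl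

theorem jspace_aux {X : Type u} [TopologicalSpace X] [T2Space X]
    (H : ∀ (Y : Type u) [TopologicalSpace Y] [T2Space Y], ¬CompactSpace Y →
        ∀ f : X → Y, Continuous f → Function.Surjective f → IsBoundaryPerfectMap f →
          IsPerfectMap f) : IsJSpace X := by
  intro A B hA hB hUnion hK
  by_contra hc
  push_neg at hc
  obtain ⟨hAnc, hBnc⟩ := hc
  rcases A.eq_empty_or_nonempty with hAe | ⟨a₀, ha₀⟩
  · exact hAnc (hAe ▸ isCompact_empty)
  have hcompl : Aᶜ ⊆ B := by
    intro x hx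
    have : x ∈ A ∪ B := hUnion ▸ Set.mem_univ x
    exact this.elim (fun h => absurd h hx) id
  -- the quotient space
  set s : Setoid X := jSetoid A with hs
  set f : X → Quotient s := Quotient.mk' with hf
  have hqm : Topology.IsQuotientMap f := isQuotientMap_quotient_mk'
  have hrel : ∀ x y : X, f x = f y ↔ (x = y ∨ (x ∈ A ∧ y ∈ A)) := by
    intro x y
    rw [hf, Quotient.eq']
    exact jSetoid_rel A x y
  -- saturation
  have hsat : ∀ S : Set X, (A ⊆ S ∨ Disjoint A S) → f ⁻¹' (f '' S) = S := by
    intro S hS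
    ext x
    simp only [Set.mem_preimage, Set.mem_image]
    constructor
    · rintro ⟨y, hyS, hyx⟩
      rcases (hrel y x).1 hyx with rfl | ⟨hyA, hxA⟩
      · exact hyS
      · rcases hS with h | h
        · exact h hxA
        · exact absurd hyS (Set.disjoint_left.1 h hyA)
    · exact fun hx => ⟨x, hx, rfl⟩
  -- fibers
  have hfibA : ∀ w ∈ A, f ⁻¹' {f w} = A := by
    intro w hw
    ext x
    simp only [Set.mem_preimage, Set.mem_singleton_iff, hrel]
    constructor
    · rintro (rfl | ⟨hx, _⟩)
      · exact hw
      · exact hx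
    · exact fun hx => Or.inr ⟨hx, hw⟩
  have hfibn : ∀ w, w ∉ A → f ⁻¹' {f w} = {w} := by
    intro w hw
    ext x
    simp only [Set.mem_preimage, Set.mem_singleton_iff, hrel]
    constructor
    · rintro (rfl | ⟨_, hwA⟩)
      · rfl
      · exact absurd hwA hw
    · rintro rfl; exact Or.inl rfl
  -- closed map
  have hclosedmap : IsClosedMap f := by
    intro C hC
    rw [← hqm.isClosed_preimage]
    rcases Set.eq_empty_or_nonempty (C ∩ A) with hCA | ⟨c, hcC, hcA⟩
    · have : f ⁻¹' (f '' C) = C := by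
        apply hsat
        right
        rw [Set.disjoint_right]
        intro x hxC hxA
        exact Set.eq_empty_iff_forall_notMem.1 hCA x ⟨hxC, hxA⟩
      rw [this]; exact hC
    · have : f ⁻¹' (f '' C) = C ∪ A := by
        ext x
        simp only [Set.mem_preimage, Set.mem_image, Set.mem_union]
        constructor
        · rintro ⟨y, hyC, hyx⟩
          rcases (hrel y x).1 hyx with rfl | ⟨_, hxA⟩
          · exact Or.inl hyC
          · exact Or.inr hxA
        · rintro (hx | hx)
          · exact ⟨x, hx, rfl⟩
          · exact ⟨c, hcC, (hrel c x).2 (Or.inr ⟨hcA, hx⟩)⟩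
      rw [this]; exact hC.union hA
  -- images of saturated open sets are open
  have himg : ∀ U : Set X, IsOpen U → (A ⊆ U ∨ Disjoint A U) → IsOpen (f '' U) := by
    intro U hU hsatU
    rw [← hqm.isOpen_preimage, hsat U hsatU]
    exact hU
  have hdisjimg : ∀ U V : Set X, (A ⊆ U ∨ Disjoint A U) → Disjoint U V →
      Disjoint (f '' U) (f '' V) := by
    intro U V hsatU hUV
    rw [Set.disjoint_left]
    rintro z ⟨u, hu, rfl⟩ ⟨v, hv, hvz⟩
    have : v ∈ f ⁻¹' (f '' U) := ⟨u, hu, hvz.symm⟩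
    rw [hsat U hsatU] at this
    exact Set.disjoint_left.1 hUV this hv
  -- separating a point outside A from A
  have hsep : ∀ x, x ∉ A → ∃ U V : Set X, IsOpen U ∧ IsOpen V ∧ x ∈ U ∧ A ⊆ V ∧
      Disjoint U V ∧ Disjoint A U := by
    intro x hx
    obtain ⟨U0, W, hU0, hW, hxU0, hKW, hU0W⟩ :=
      SeparatedNhds.of_isCompact_isCompact isCompact_singleton hK
        (by rw [Set.disjoint_left]; rintro z rfl ⟨hzA, _⟩; exact hx hzA)
    refine ⟨U0 ∩ Aᶜ, W ∪ Bᶜ, hU0.inter hA.isOpen_compl, hW.union hB.isOpen_compl,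
      ⟨hxU0 rfl, hx⟩, ?_, ?_, ?_⟩
    · intro a ha
      by_cases hb : a ∈ B
      · exact Or.inl (hKW ⟨ha, hb⟩)
      · exact Or.inr hb
    · rw [Set.disjoint_left]
      rintro z ⟨hzU0, hzA⟩ (hzW | hzB)
      · exact Set.disjoint_left.1 hU0W hzU0 hzW
      · exact hzB (hcompl hzA)
    · rw [Set.disjoint_right]; rintro z ⟨_, hzA⟩; exact hzA
  -- Hausdorff
  haveI hT2 : T2Space (Quotient s) := by
    refine ⟨fun {a b} hab => ?_⟩
    obtain ⟨x, rfl⟩ := hqm.surjective a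
    obtain ⟨y, rfl⟩ := hqm.surjective b
    by_cases hx : x ∈ A
    · by_cases hy : y ∈ A
      · exact absurd ((hrel x y).2 (Or.inr ⟨hx, hy⟩)) hab
      · obtain ⟨U, V, hU, hV, hyU, hAV, hUV, hAU⟩ := hsep y hy
        exact ⟨f '' V, f '' U, himg V hV (Or.inl hAV), himg U hU (Or.inr hAU),
          ⟨x, hAV hx, rfl⟩, ⟨y, hyU, rfl⟩,
          (hdisjimg U V (Or.inr hAU) hUV).symm⟩
    · by_cases hy : y ∈ A
      · obtain ⟨U, V, hU, hV, hxU, hAV, hUV, hAU⟩ := hsep x hx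
        exact ⟨f '' U, f '' V, himg U hU (Or.inr hAU), himg V hV (Or.inl hAV),
          ⟨x, hxU, rfl⟩, ⟨y, hAV hy, rfl⟩, hdisjimg U V (Or.inr hAU) hUV⟩
      · have hxy : x ≠ y := by rintro rfl; exact hab rfl
        obtain ⟨U0, V0, hU0, hV0, hxU0, hyV0, hUV0⟩ := t2_separation hxy
        refine ⟨f '' (U0 ∩ Aᶜ), f '' (V0 ∩ Aᶜ), ?_, ?_, ⟨x, ⟨hxU0, hx⟩, rfl⟩,
          ⟨y, ⟨hyV0, hy⟩, rfl⟩, ?_⟩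
        · exact himg _ (hU0.inter hA.isOpen_compl)
            (Or.inr (by rw [Set.disjoint_right]; rintro z ⟨_, hz⟩; exact hz))
        · exact himg _ (hV0.inter hA.isOpen_compl)
            (Or.inr (by rw [Set.disjoint_right]; rintro z ⟨_, hz⟩; exact hz))
        · exact hdisjimg _ _
            (Or.inr (by rw [Set.disjoint_right]; rintro z ⟨_, hz⟩; exact hz))
            (hUV0.mono Set.inter_subset_left Set.inter_subset_left)
  -- the quotient is not compact
  have hnc : ¬CompactSpace (Quotient s) := by
    intro hY
    apply hBnc
    apply isCompact_of_finite_subcover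
    intro ι U hUo hBU
    classical
    obtain ⟨t, ht⟩ := hK.elim_finite_subcover U hUo
      (fun x hx => hBU hx.2)
    set W : Set X := (⋃ i ∈ t, U i) ∪ Bᶜ with hW
    have hWopen : IsOpen W := (isOpen_biUnion fun i _ => hUo i).union hB.isOpen_compl
    have hAW : A ⊆ W := by
      intro a ha
      by_cases hb : a ∈ B
      · exact Or.inl (ht ⟨ha, hb⟩)
      · exact Or.inr hb
    set D : Set X := Wᶜ with hD
    have hDclosed : IsClosed D := hWopen.isClosed_compl
    have hDB : D ⊆ B := fun x hx => by
      by_contra hb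
      exact hx (Or.inr hb)
    have hDA : Disjoint A D := by
      rw [Set.disjoint_right]
      exact fun x hx hxA => hx (hAW hxA)
    -- D is compact, via the proper map D → Quotient s
    have hDcompact : IsCompact D := by
      have hproper : IsProperMap (fun d : D => f d) := by
        rw [isProperMap_iff_isClosedMap_and_compact_fibers]
        refine ⟨hqm.continuous.comp continuous_subtype_val, ?_, ?_⟩
        · intro C hC
          have : (fun d : D => f d) '' C = f '' (Subtype.val '' C) := by
            rw [Set.image_image]
          rw [this]
          exact hclosedmap _ (hDclosed.isClosedMap_subtype_val C hC)
        · intro z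
          apply Set.Subsingleton.isCompact
          rintro d hd d' hd'
          simp only [Set.mem_preimage, Set.mem_singleton_iff] at hd hd'
          have : f (d : X) = f (d' : X) := hd.trans hd'.symm
          rcases (hrel _ _).1 this with h | ⟨h1, _⟩
          · exact Subtype.ext h
          · exact (Set.disjoint_left.1 hDA h1 d.2).elim
      have : IsCompact ((fun d : D => f d) ⁻¹' Set.univ) :=
        hproper.isCompact_preimage isCompact_univ
      rw [Set.preimage_univ] at this
      rw [isCompact_iff_compactSpace]
      exact isCompact_univ_iff.1 this
    obtain ⟨t', ht'⟩ := hDcompact.elim_finite_subcover U hUo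
      (fun x hx => hBU (hDB hx))
    refine ⟨t ∪ t', fun x hxB => ?_⟩
    by_cases hxW : x ∈ W
    · rcases hxW with hxU | hxB'
      · obtain ⟨i, hi⟩ := Set.mem_iUnion.1 hxU
        obtain ⟨hit, hxi⟩ := by simpa using hi
        exact Set.mem_biUnion (Finset.mem_union_left _ hit) hxi
      · exact absurd hxB hxB'
    · obtain ⟨i, hi⟩ := Set.mem_iUnion.1 (ht' hxW)
      obtain ⟨hit, hxi⟩ := by simpa using hi
      exact Set.mem_biUnion (Finset.mem_union_right _ hit) hxi
  -- f is boundary-perfect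
  have hbp : IsBoundaryPerfectMap f := by
    refine ⟨hclosedmap, fun z => ?_⟩
    obtain ⟨w, rfl⟩ := hqm.surjective z
    by_cases hw : w ∈ A
    · rw [hfibA w hw]
      have hfr : frontier A ⊆ A ∩ B := by
        rw [frontier_eq_closure_inter_closure, hA.closure_eq]
        exact Set.inter_subset_inter_right A
          ((closure_mono hcompl).trans hB.closure_eq.subset)
      exact hK.of_isClosed_subset isClosed_frontier hfr
    · rw [hfibn w hw]
      exact isCompact_singleton.of_isClosed_subset isClosed_frontier
        (frontier_subset_closure.trans closure_singleton.subset)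
  have hperf := H (Quotient s) hnc f hqm.continuous hqm.surjective hbp
  have := hperf.2 (f a₀)
  rw [hfibA a₀ ha₀] at this
  exact hAnc this

/-- A Hausdorff space `X` is a J-space iff every boundary-perfect map from `X` onto a
non-compact Hausdorff space is perfect. -/
theorem isJSpace_iff_boundaryPerfect_onto_noncompact_perfect (X : Type u)
    [TopologicalSpace X] [T2Space X] :
    IsJSpace X ↔
      ∀ (Y : Type u) [TopologicalSpace Y] [T2Space Y], ¬CompactSpace Y →
        ∀ f : X → Y, Continuous f → Function.Surjective f → IsBoundaryPerfectMap f →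
          IsPerfectMap f := by
  constructor
  · intro hJ Y _ _ hY f hf hsurj hbp
    obtain ⟨hcl, hbd⟩ := hbp
    refine ⟨hcl, fun y => ?_⟩
    set F : Set X := f ⁻¹' {y} with hF
    have hFc : IsClosed F := isClosed_singleton.preimage hf
    have hfr : F \ interior F = frontier F := (hFc.frontier_eq).symm
    rcases hJ (interior F)ᶜ F isOpen_interior.isClosed_compl hFc
      (by
        rw [Set.eq_univ_iff_forall]
        intro x
        by_cases hx : x ∈ interior F
        · have h1 : interior F ⊆ F := interior_subset
          exact Or.inr (h1 hx)
        · exact Or.inl hx)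
      (by
        have : (interior F)ᶜ ∩ F = frontier F := by
          rw [← hfr, Set.diff_eq, Set.inter_comm]
        rw [this]
        exact hbd y) with hcomp | hcomp
    · exfalso
      apply hY
      have huniv : (Set.univ : Set Y) ⊆ f '' (interior F)ᶜ ∪ {y} := by
        intro z _
        obtain ⟨x, rfl⟩ := hsurj z
        by_cases hx : x ∈ (interior F)ᶜ
        · exact Or.inl ⟨x, hx, rfl⟩
        · rw [Set.notMem_compl_iff] at hx
          have h1 : interior F ⊆ F := interior_subset
          exact Or.inr (h1 hx)
      have : IsCompact (f '' (interior F)ᶜ ∪ {y}) :=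
        (hcomp.image hf).union isCompact_singleton
      exact isCompact_univ_iff.1 (this.of_isClosed_subset isClosed_univ huniv)
    · exact hcomp
  · exact jspace_aux
end

section
/- If X is a Hausdorff J-space, then every boundary-perfect map f : X → Y to a Hausdorff space Y has at most one non-compact fiber; that is, there is at most one y ∈ Y for which f⁻¹(y) is not compact. -/
/-- If `X` is a J-space, then every boundary-perfect map `f : X → Y` has at most one
non-compact fiber. -/
theorem boundaryPerfect_atMostOne_noncompact_fiber_of_isJSpace {X Y : Type*}
    [TopologicalSpace X] [T2Space X] [TopologicalSpace Y] [T2Space Y]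
    (hX : IsJSpace X) (f : X → Y) (hf : Continuous f) (hbp : IsBoundaryPerfectMap f)
    (y₁ y₂ : Y) (h₁ : ¬IsCompact (f ⁻¹' {y₁})) (h₂ : ¬IsCompact (f ⁻¹' {y₂})) :
    y₁ = y₂ := by
  by_contra hne
  set F₁ : Set X := f ⁻¹' {y₁} with hF₁
  have hF₁closed : IsClosed F₁ := (isClosed_singleton).preimage hf
  have hcl : IsClosed (closure F₁ᶜ) := isClosed_closure
  have hunion : F₁ ∪ closure F₁ᶜ = Set.univ := by
    apply Set.eq_univ_of_forall
    intro x
    by_cases hx : x ∈ F₁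
    · exact Or.inl hx
    · exact Or.inr (subset_closure hx)
  have hinter : F₁ ∩ closure F₁ᶜ = frontier F₁ := by
    rw [frontier_eq_closure_inter_closure, hF₁closed.closure_eq]
  have hcompact : IsCompact (F₁ ∩ closure F₁ᶜ) := by
    rw [hinter]; exact hbp.2 y₁
  rcases hX F₁ (closure F₁ᶜ) hF₁closed hcl hunion hcompact with h | h
  · exact h₁ h
  · apply h₂
    refine h.of_isClosed_subset ((isClosed_singleton).preimage hf) ?_
    intro x hx
    apply subset_closure
    intro hx1
    exact hne (by rw [← hx1, ← hx])
end

section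
/- Let X be a locally compact Hausdorff space. If every boundary-perfect map f : X → Y to a Hausdorff space Y has at most one non-compact fiber (i.e., at most one y ∈ Y with f⁻¹(y) not compact), then X is a J-space. -/
open Set Topology

theorem frontier_subset_inter_of_union_eq_univ {X : Type*} [TopologicalSpace X] {A B : Set X}
    (hA : IsClosed A) (hB : IsClosed B) (hAB : A ∪ B = univ) : frontier A ⊆ A ∩ B := by
  rw [hA.frontier_eq]
  rintro x ⟨hxA, hxi⟩
  refine ⟨hxA, by_contra fun hxB => hxi ?_⟩
  exact interior_maximal (compl_subset_iff_union.2 (union_comm A B ▸ hAB)) hB.isOpen_compl hxB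

theorem IsBoundaryPerfectMap.homeomorph_comp {X Y Z : Type*} [TopologicalSpace X]
    [TopologicalSpace Y] [TopologicalSpace Z] {f : X → Y} (hf : IsBoundaryPerfectMap f)
    (e : Y ≃ₜ Z) : IsBoundaryPerfectMap (e ∘ f) := by
  refine ⟨e.isClosedMap.comp hf.1, fun z => ?_⟩
  rw [preimage_comp, ← e.image_symm, image_singleton]
  exact hf.2 (e.symm z)

theorem isBoundaryPerfectMap_of_mapsTo_compl_finite {X Y : Type*} [TopologicalSpace X]
    [T2Space X] [TopologicalSpace Y] [T2Space Y] {f : X → Y} (hf : Continuous f) {K : Set X}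
    (hK : IsCompact K) {s : Set Y} (hs : s.Finite) (hfK : MapsTo f Kᶜ s) :
    IsBoundaryPerfectMap f := by
  refine ⟨fun C hC => ?_, fun y => ?_⟩
  · rw [← inter_union_sdiff C K, image_union]
    exact ((hK.inter_left hC).image hf).isClosed.union
      ((hs.subset (image_subset_iff.2 fun x hx => hfK hx.2)).isClosed)
  · refine hK.of_isClosed_subset isClosed_frontier fun x hx => by_contra fun hxK => ?_
    have hfx : f x = y := by
      simpa using frontier_subset_closure (hf.frontier_preimage_subset {y} hx)
    -- Off `K`, continuity forces `f` to be locally constant, so `x` is interior to its fiber.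
    refine hx.2 (mem_interior_iff_mem_nhds.2 ?_)
    filter_upwards [hK.isClosed.isOpen_compl.mem_nhds hxK,
      hf.continuousAt.preimage_mem_nhds
        (((hs.sdiff (t := {f x})).isClosed.isOpen_compl).mem_nhds fun h => h.2 rfl)]
      with z hzK hz
    by_contra hzy
    exact hz ⟨hfK hzK, hfx ▸ hzy⟩

theorem exists_isBoundaryPerfectMap_real_of_union_eq_univ {X : Type*} [TopologicalSpace X]
    [T2Space X] [LocallyCompactSpace X] {A B : Set X} (hA : IsClosed A) (hB : IsClosed B)
    (hAB : A ∪ B = univ) (hK : IsCompact (A ∩ B)) :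
    ∃ g : X → ℝ, Continuous g ∧ IsBoundaryPerfectMap g ∧
      ∃ K, IsCompact K ∧ A ⊆ g ⁻¹' {1} ∪ K ∧ B ⊆ g ⁻¹' {-1} ∪ K := by
  classical
  obtain ⟨φ, hφ1, -, hφc, -⟩ :=
    exists_continuous_one_zero_of_isCompact hK isClosed_empty (disjoint_empty _)
  set g : X → ℝ := fun x => if x ∈ A then 1 - φ x else φ x - 1
  have hφ0 : ∀ x ∉ tsupport φ, φ x = 0 := fun x hx => image_eq_zero_of_notMem_tsupport hx
  have hg : Continuous g := by
    refine Continuous.if (fun x hx => ?_) (by fun_prop) (by fun_prop)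
    simp [hφ1 (frontier_subset_inter_of_union_eq_univ hA hB hAB hx)]
  have hgK : MapsTo g (tsupport φ)ᶜ {1, -1} := fun x hx => by
    by_cases hxA : x ∈ A <;> simp [g, hxA, hφ0 x hx]
  refine ⟨g, hg, isBoundaryPerfectMap_of_mapsTo_compl_finite hg hφc (toFinite _) hgK,
    tsupport φ, hφc, fun x hxA => ?_, fun x hxB => ?_⟩
  · by_cases hx : x ∈ tsupport φ
    · exact Or.inr hx
    · exact Or.inl (by simp [g, hxA, hφ0 x hx])
  · by_cases hx : x ∈ tsupport φ
    · exact Or.inr hx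
    · have hxA : x ∉ A := fun hxA => by
        have := hφ1 ⟨hxA, hxB⟩
        simp [hφ0 x hx] at this
      exact Or.inl (by simp [g, hxA, hφ0 x hx])

/-- If `X` is locally compact Hausdorff and every boundary-perfect map from `X` has at
most one non-compact fiber, then `X` is a J-space. -/
theorem isJSpace_of_locallyCompact_of_boundaryPerfect_atMostOne_noncompact_fiber
    (X : Type u) [TopologicalSpace X] [T2Space X] [LocallyCompactSpace X]
    (h : ∀ (Y : Type u) [TopologicalSpace Y] [T2Space Y],
      ∀ f : X → Y, Continuous f → IsBoundaryPerfectMap f →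
        ∀ y₁ y₂ : Y, ¬IsCompact (f ⁻¹' {y₁}) → ¬IsCompact (f ⁻¹' {y₂}) → y₁ = y₂) :
    IsJSpace X := by
  intro A B hA hB hAB hK
  by_contra! hnc
  obtain ⟨g, hg, hgbp, K, hKc, hAK, hBK⟩ :=
    exists_isBoundaryPerfectMap_real_of_union_eq_univ hA hB hAB hK
  have hfiber : ∀ {S : Set X} {y : ℝ}, IsClosed S → ¬IsCompact S → S ⊆ g ⁻¹' {y} ∪ K →
      ¬IsCompact ((ULift.up.{u} ∘ g) ⁻¹' {ULift.up y}) := fun hS hSnc hSK hc => by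
    rw [preimage_comp, ← image_singleton, ULift.up_injective.preimage_image] at hc
    exact hSnc ((hc.union hKc).of_isClosed_subset hS hSK)
  have := h (ULift.{u} ℝ) (ULift.up ∘ g) (continuous_uliftUp.comp hg)
    (hgbp.homeomorph_comp Homeomorph.ulift.symm) _ _ (hfiber hA hnc.1 hAK) (hfiber hB hnc.2 hBK)
  norm_num at this
end

section
/- Let X be a paracompact, locally compact Hausdorff space. Then the following are equivalent: (a) X is a J-space; (b) every closed continuous map f : X → Y onto a non-compact, locally compact Hausdorff space Y is perfect; (c) every closed continuous map f : X → Y onto a locally compact Hausdorff space Y has at most one non-compact fiber (i.e., at most one y ∈ Y with f⁻¹(y) not compact). -/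
/-!
A paracompact locally compact space is the disjoint union of the clopen, σ-compact chain
classes of a locally finite cover by relatively compact open sets; a J-space has only finitely
many of them, so it is σ-compact. For a closed map `f` out of a σ-compact space only finitely
many fibers over a compact set are non-compact, so a non-compact fiber `f⁻¹ y` lies over the
interior of a compact neighbourhood `K` whose boundary fibers are all compact. The J-property
for `f⁻¹ K` and `f⁻¹ (interior K)ᶜ` then forces every fiber away from `y` to be compact.

Conversely, collapsing a closed set to a point gives closed maps onto locally compact Hausdorff
spaces: collapsing the complement of the interior of a compact neighbourhood of `y` turns one
non-compact fiber into two, and collapsing `A` in a decomposition `X = A ∪ B` violating the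
J-property gives a closed map onto a non-compact space with the non-compact fiber `A`.
-/

universe u

open Set Topology Filter

section ChainQuotient

variable {X ι : Type*} [TopologicalSpace X]

def chainSetoid (v : ι → Set X) : Setoid X where
  r := Relation.ReflTransGen fun x y => ∃ j, x ∈ v j ∧ y ∈ v j
  iseqv := by
    have : Std.Symm fun x y : X => ∃ j, x ∈ v j ∧ y ∈ v j :=
      ⟨fun _ _ ⟨j, hx, hy⟩ => ⟨j, hy, hx⟩⟩
    exact ⟨fun _ => .refl, fun h => symm h, .trans⟩

def chainDiscreteQuotient {v : ι → Set X} (hv : ∀ j, IsOpen (v j)) (hcov : ⋃ j, v j = univ) :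
    DiscreteQuotient X where
  toSetoid := chainSetoid v
  isOpen_setOfPred_rel x := by
    refine isOpen_iff_forall_mem_open.2 fun y hy => ?_
    obtain ⟨j, hj⟩ := mem_iUnion.1 (hcov.symm ▸ mem_univ y)
    exact ⟨v j, fun z hz => Relation.ReflTransGen.tail hy ⟨j, hj, hz⟩, hv j, hj⟩

theorem chainDiscreteQuotient_isSigmaCompact_fiber {v : ι → Set X} (hv : ∀ j, IsOpen (v j))
    (hcov : ⋃ j, v j = univ) (hlf : LocallyFinite v) {K : ι → Set X}
    (hK : ∀ j, IsCompact (K j)) (hvK : ∀ j, v j ⊆ K j) (x : X) :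
    IsSigmaCompact ((chainDiscreteQuotient hv hcov).proj ⁻¹'
      {(chainDiscreteQuotient hv hcov).proj x}) := by
  set step : Set X → Set X := fun s => ⋃ j ∈ {j | (v j ∩ s).Nonempty}, K j
  have hstep : ∀ n, IsCompact (step^[n] {x}) := by
    intro n
    induction n with
    | zero => exact isCompact_singleton
    | succ n ih =>
      rw [Function.iterate_succ_apply']
      exact (hlf.finite_nonempty_inter_compact ih).isCompact_biUnion fun j _ => hK j
  have hreach : ∀ y, (chainSetoid v) x y → ∃ n, y ∈ step^[n] {x} := by
    intro y hy
    induction hy with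
    | refl => exact ⟨0, rfl⟩
    | tail _ hyz ih =>
      obtain ⟨n, hn⟩ := ih
      obtain ⟨j, hy, hz⟩ := hyz
      refine ⟨n + 1, ?_⟩
      rw [Function.iterate_succ_apply']
      exact mem_biUnion (show (v j ∩ _).Nonempty from ⟨_, hy, hn⟩) (hvK j hz)
  refine (isSigmaCompact_iUnion_of_isCompact _ hstep).of_isClosed_subset
    ((chainDiscreteQuotient hv hcov).isClosed_preimage _) fun y hy => ?_
  rw [DiscreteQuotient.fiber_eq] at hy
  exact mem_iUnion.2 (hreach y hy)

theorem exists_discreteQuotient_isSigmaCompact_fiber [ParacompactSpace X]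
    [WeaklyLocallyCompactSpace X] :
    ∃ S : DiscreteQuotient X, ∀ x, IsSigmaCompact (S.proj ⁻¹' {S.proj x}) := by
  choose K hK hKx using exists_compact_mem_nhds (X := X)
  obtain ⟨v, hv, hcov, hlf, hvK⟩ := precise_refinement (fun x => interior (K x))
    (fun _ => isOpen_interior)
    (eq_univ_of_forall fun x => mem_iUnion.2 ⟨x, mem_interior_iff_mem_nhds.2 (hKx x)⟩)
  exact ⟨_, chainDiscreteQuotient_isSigmaCompact_fiber hv hcov hlf hK
    fun j => (hvK j).trans interior_subset⟩

end ChainQuotient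

theorem IsJSpace.finite_discreteQuotient {X : Type*} [TopologicalSpace X] (hJ : IsJSpace X)
    (S : DiscreteQuotient X) : Finite S := by
  by_contra hinf
  rw [not_finite_iff_infinite] at hinf
  let e := Infinite.natEmbedding S
  have hinj : ∀ k, Function.Injective fun n => e (2 * n + k) :=
    fun k m n h => by simpa using e.injective h
  set P := range fun n => e (2 * n)
  have hPc : range (fun n => e (2 * n + 1)) ⊆ Pᶜ := by
    rintro _ ⟨n, rfl⟩ ⟨m, hm⟩
    have := e.injective hm
    omega
  have himage : ∀ Q : Set S, IsCompact (S.proj ⁻¹' Q) → Q.Finite := fun Q hQ => by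
    simpa [image_preimage_eq _ S.proj_surjective] using
      (hQ.image S.proj_continuous).finite_of_discrete
  rcases hJ _ _ (S.isClosed_preimage P) (S.isClosed_preimage Pᶜ) (by simp)
      (by simp) with h | h
  · exact infinite_range_of_injective (hinj 0) (himage _ h)
  · exact infinite_range_of_injective (hinj 1) ((himage _ h).subset hPc)

theorem IsJSpace.sigmaCompactSpace {X : Type*} [TopologicalSpace X] [ParacompactSpace X]
    [WeaklyLocallyCompactSpace X] (hJ : IsJSpace X) : SigmaCompactSpace X := by
  obtain ⟨S, hS⟩ := exists_discreteQuotient_isSigmaCompact_fiber (X := X)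
  have := hJ.finite_discreteQuotient S
  rw [← isSigmaCompact_univ_iff, ← preimage_univ (f := S.proj), ← iUnion_of_singleton S,
    preimage_iUnion]
  exact isSigmaCompact_iUnion _ fun q => by
    obtain ⟨x, rfl⟩ := S.proj_surjective q
    exact hS x

section ClosedMap

variable {X Y : Type*} [TopologicalSpace X] [TopologicalSpace Y] {f : X → Y}

def nonCompactFibers (f : X → Y) : Set Y := {y | ¬IsCompact (f ⁻¹' {y})}

theorem IsClosedMap.isCompact_preimage_of_isCompact_fibers (hf : Continuous f)
    (hcl : IsClosedMap f) {D : Set Y} (hD : IsCompact D)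
    (hfib : ∀ y ∈ D, IsCompact (f ⁻¹' {y})) : IsCompact (f ⁻¹' D) := by
  have hproper : IsProperMap (D.restrictPreimage f) :=
    isProperMap_iff_isClosedMap_and_compact_fibers.2 ⟨hf.restrictPreimage,
      hcl.restrictPreimage D, fun y => by
        rw [Subtype.isCompact_iff, image_val_preimage_restrictPreimage, image_singleton]
        exact hfib y y.2⟩
  have := (hproper.isCompact_preimage (isCompact_iff_isCompact_univ.1 hD)).image
    continuous_subtype_val
  rwa [image_val_preimage_restrictPreimage, image_univ, Subtype.range_coe] at this

theorem IsClosedMap.finite_inter_nonCompactFibers [T1Space X] [T1Space Y]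
    [SigmaCompactSpace X] [WeaklyLocallyCompactSpace X] (hf : Continuous f)
    (hcl : IsClosedMap f) {C : Set Y} (hC : IsCompact C) :
    (C ∩ nonCompactFibers f).Finite := by
  by_contra hinf
  set e := Set.Infinite.natEmbedding _ hinf
  set y : ℕ → Y := fun n => e n
  have hy : Function.Injective y := fun m n h => e.injective (Subtype.ext h)
  let K := CompactExhaustion.choice X
  have hescape : ∀ n, ∃ x, f x = y n ∧ x ∉ K n := fun n => by
    by_contra! h
    exact (e n).2.2 ((K.isCompact n).of_isClosed_subset (isClosed_singleton.preimage hf)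
      fun x hx => h x hx)
  choose p hpy hpK using hescape
  -- the points `p n` escape every compact set, so `f` maps each set of them to a closed set
  have hlf : LocallyFinite fun n => ({p n} : Set X) := fun x => by
    obtain ⟨m, hm⟩ := K.exists_mem_nhds x
    refine ⟨K m, hm, (finite_lt_nat m).subset fun n ⟨_, hn, hnm⟩ => ?_⟩
    by_contra! h
    exact hpK n (K.subset (not_lt.1 h) (hn ▸ hnm))
  have hclosed : ∀ t ⊆ range y, IsClosed t := fun t ht => by
    have : t = f '' ⋃ n, {p n} ∩ f ⁻¹' t := by
      rw [← iUnion_inter, image_inter_preimage, iUnion_singleton_eq_range, ← range_comp,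
        show f ∘ p = y from funext hpy, inter_eq_right.2 ht]
    rw [this]
    exact hcl _ ((hlf.subset fun n => inter_subset_left).isClosed_iUnion fun n =>
      (subsingleton_singleton.anti inter_subset_left).isClosed)
  have hdisc : IsDiscrete (range y) :=
    isDiscrete_iff_forall_mem_exists_isClosed.2 fun t ht =>
      ⟨t, hclosed t ht, inter_eq_left.2 ht⟩
  have hcpt : IsCompact (range y) := hC.of_isClosed_subset (hclosed _ subset_rfl)
    (range_subset_iff.2 fun n => (e n).2.1)
  exact infinite_range_of_injective hy (hcpt.finite hdisc)

theorem IsClosedMap.exists_compact_mem_nhds_inter_nonCompactFibers_subset [T1Space X]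
    [T1Space Y] [SigmaCompactSpace X] [WeaklyLocallyCompactSpace X] [LocallyCompactSpace Y]
    (hf : Continuous f) (hcl : IsClosedMap f) {y : Y} {U : Set Y} (hU : U ∈ 𝓝 y) :
    ∃ K ∈ 𝓝 y, IsCompact K ∧ K ⊆ U ∧ K ∩ nonCompactFibers f ⊆ {y} := by
  obtain ⟨K₀, hK₀, hK₀U, hK₀c⟩ := local_compact_nhds hU
  have hF := (hcl.finite_inter_nonCompactFibers hf hK₀c).sdiff (t := {y})
  obtain ⟨K, hK, hKsub, hKc⟩ := local_compact_nhds
    (inter_mem hK₀ (hF.isClosed.isOpen_compl.mem_nhds fun h => h.2 rfl))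
  refine ⟨K, hK, hKc, fun z hz => hK₀U (hKsub hz).1, fun z ⟨hzK, hzf⟩ => ?_⟩
  by_contra hzy
  exact (hKsub hzK).2 ⟨⟨(hKsub hzK).1, hzf⟩, hzy⟩

theorem IsJSpace.isCompact_preimage_compl [T1Space X] [SigmaCompactSpace X]
    [WeaklyLocallyCompactSpace X] [T2Space Y] [LocallyCompactSpace Y] (hJ : IsJSpace X)
    (hf : Continuous f) (hcl : IsClosedMap f) {y : Y} (hy : y ∈ nonCompactFibers f)
    {U : Set Y} (hU : IsOpen U) (hyU : y ∈ U) : IsCompact (f ⁻¹' Uᶜ) := by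
  obtain ⟨K, hK, hKc, hKU, hKy⟩ :=
    hcl.exists_compact_mem_nhds_inter_nonCompactFibers_subset hf (hU.mem_nhds hyU)
  have hfrontier : IsCompact (f ⁻¹' K ∩ f ⁻¹' (interior K)ᶜ) := by
    refine hcl.isCompact_preimage_of_isCompact_fibers hf (hKc.diff isOpen_interior)
      fun z ⟨hzK, hzi⟩ => ?_
    by_contra hz
    exact hzi (hKy ⟨hzK, hz⟩ ▸ mem_interior_iff_mem_nhds.2 hK)
  have hcover : f ⁻¹' K ∪ f ⁻¹' (interior K)ᶜ = univ :=
    compl_subset_iff_union.1 (preimage_mono (compl_subset_compl.2 (interior_subset (s := K))))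
  rcases hJ _ _ (hKc.isClosed.preimage hf) (isOpen_interior.isClosed_compl.preimage hf) hcover
      hfrontier with h | h
  · exact absurd (h.of_isClosed_subset (isClosed_singleton.preimage hf)
      (preimage_mono (singleton_subset_iff.2 (mem_of_mem_nhds hK)))) hy
  · exact h.of_isClosed_subset (hU.isClosed_compl.preimage hf)
      (preimage_mono (compl_subset_compl.2 (interior_subset.trans hKU)))

theorem IsJSpace.subsingleton_nonCompactFibers [T1Space X] [SigmaCompactSpace X]
    [WeaklyLocallyCompactSpace X] [T2Space Y] [LocallyCompactSpace Y] (hJ : IsJSpace X)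
    (hf : Continuous f) (hcl : IsClosedMap f) : (nonCompactFibers f).Subsingleton := by
  intro y₁ h₁ y₂ h₂
  by_contra hne
  have := hJ.isCompact_preimage_compl hf hcl h₁ isOpen_compl_singleton hne
  rw [compl_compl] at this
  exact h₂ this

end ClosedMap

def collapseSetoid {α : Type*} (s : Set α) : Setoid α where
  r x y := x = y ∨ x ∈ s ∧ y ∈ s
  iseqv := by
    refine ⟨fun _ => .inl rfl, fun h => h.imp Eq.symm And.symm, ?_⟩
    rintro x y z (rfl | ⟨hx, hy⟩) (rfl | ⟨hy', hz⟩)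
    exacts [.inl rfl, .inr ⟨hy', hz⟩, .inr ⟨hx, hy⟩, .inr ⟨hx, hz⟩]

def Collapse {α : Type*} (s : Set α) : Type _ := Quotient (collapseSetoid s)

namespace Collapse

variable {α : Type*} {s : Set α}

def mk (s : Set α) : α → Collapse s := Quotient.mk _

theorem mk_eq_mk {x y : α} : mk s x = mk s y ↔ x = y ∨ x ∈ s ∧ y ∈ s := Quotient.eq

theorem surjective_mk : Function.Surjective (mk s) := Quotient.mk_surjective

theorem preimage_image_mk_of_subset {t : Set α} (h : s ⊆ t) : mk s ⁻¹' (mk s '' t) = t := by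
  refine (subset_preimage_image _ _).antisymm' fun x ⟨y, hy, hyx⟩ => ?_
  rcases mk_eq_mk.1 hyx with rfl | ⟨-, hx⟩
  exacts [hy, h hx]

theorem preimage_image_mk_of_disjoint {t : Set α} (h : Disjoint t s) :
    mk s ⁻¹' (mk s '' t) = t := by
  refine (subset_preimage_image _ _).antisymm' fun x ⟨y, hy, hyx⟩ => ?_
  rcases mk_eq_mk.1 hyx with rfl | ⟨hys, -⟩
  exacts [hy, absurd hys (h.notMem_of_mem_left hy)]

theorem preimage_mk_singleton_of_mem {a : α} (ha : a ∈ s) : mk s ⁻¹' {mk s a} = s := by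
  ext x
  simp only [mem_preimage, mem_singleton_iff, mk_eq_mk]
  exact ⟨by rintro (rfl | ⟨hx, -⟩) <;> assumption, fun hx => .inr ⟨hx, ha⟩⟩

theorem preimage_mk_singleton_of_notMem {a : α} (ha : a ∉ s) : mk s ⁻¹' {mk s a} = {a} := by
  ext x
  simp only [mem_preimage, mem_singleton_iff, mk_eq_mk]
  exact ⟨by rintro (rfl | ⟨-, ha'⟩); exacts [rfl, absurd ha' ha], .inl⟩

theorem disjoint_image_mk {t u : Set α} (hu : Disjoint u s) (htu : Disjoint t u) :
    Disjoint (mk s '' t) (mk s '' u) := by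
  rw [disjoint_left]
  rintro _ ⟨x, hx, rfl⟩ ⟨y, hy, hyx⟩
  rcases mk_eq_mk.1 hyx with rfl | ⟨hys, -⟩
  exacts [htu.notMem_of_mem_left hx hy, hu.notMem_of_mem_left hy hys]

variable [TopologicalSpace α]

instance : TopologicalSpace (Collapse s) := inferInstanceAs (TopologicalSpace (Quotient _))

theorem isQuotientMap_mk : IsQuotientMap (mk s) := isQuotientMap_quotient_mk'

theorem continuous_mk : Continuous (mk s) := isQuotientMap_mk.continuous

theorem isOpen_image_mk {t : Set α} (ht : IsOpen t) (h : s ⊆ t ∨ Disjoint t s) :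
    IsOpen (mk s '' t) := by
  rw [← isQuotientMap_mk.isOpen_preimage]
  rcases h with h | h
  · rwa [preimage_image_mk_of_subset h]
  · rwa [preimage_image_mk_of_disjoint h]

theorem isClosedMap_mk (hs : IsClosed s) : IsClosedMap (mk s) := by
  intro t ht
  rw [← isQuotientMap_mk.isClosed_preimage]
  by_cases hts : Disjoint t s
  · rwa [preimage_image_mk_of_disjoint hts]
  · obtain ⟨x, hxt, hxs⟩ := not_disjoint_iff.1 hts
    have : mk s '' t = mk s '' (t ∪ s) := by
      refine (image_mono subset_union_left).antisymm ?_
      rintro _ ⟨y, hy | hy, rfl⟩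
      exacts [⟨y, hy, rfl⟩, ⟨x, hxt, mk_eq_mk.2 (.inr ⟨hxs, hy⟩)⟩]
    rw [this, preimage_image_mk_of_subset subset_union_right]
    exact ht.union hs

theorem t2Space [T1Space α] [RegularSpace α] (hs : IsClosed s) : T2Space (Collapse s) := by
  -- separating `y` from the closed set `insert x s` covers both `x ∈ s` and `x ∉ s`
  have key : ∀ x y, y ∉ insert x s → ∃ u v, IsOpen (mk s '' u) ∧ IsOpen (mk s '' v) ∧
      x ∈ u ∧ y ∈ v ∧ Disjoint (mk s '' u) (mk s '' v) := fun x y hy => by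
    obtain ⟨v, u, hv, hu, hyv, hxu, hvu⟩ :=
      SeparatedNhds.of_isCompact_isClosed isCompact_singleton (isClosed_singleton.union hs)
        (disjoint_singleton_left.2 hy)
    have hvs : Disjoint v s := hvu.mono_right ((subset_insert x s).trans hxu)
    exact ⟨u, v, isOpen_image_mk hu (.inl ((subset_insert x s).trans hxu)),
      isOpen_image_mk hv (.inr hvs), hxu (mem_insert x s), hyv rfl,
      disjoint_image_mk hvs hvu.symm⟩
  refine ⟨surjective_mk.forall₂.2 fun x y hxy => ?_⟩
  by_cases hy : y ∈ insert x s
  · have hx : x ∉ insert y s := by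
      rintro (rfl | hx)
      · exact hxy rfl
      · exact hxy (mk_eq_mk.2 (hy.elim (fun h => .inl h.symm) fun hy => .inr ⟨hx, hy⟩))
    obtain ⟨u, v, hu, hv, hyu, hxv, huv⟩ := key y x hx
    exact ⟨_, _, hv, hu, ⟨x, hxv, rfl⟩, ⟨y, hyu, rfl⟩, huv.symm⟩
  · obtain ⟨u, v, hu, hv, hxu, hyv, huv⟩ := key x y hy
    exact ⟨_, _, hu, hv, ⟨x, hxu, rfl⟩, ⟨y, hyv, rfl⟩, huv⟩

theorem weaklyLocallyCompactSpace [LocallyCompactSpace α] (hs : IsClosed s) {M : Set α}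
    (hM : IsCompact M) (hsM : s ⊆ interior (s ∪ M)) :
    WeaklyLocallyCompactSpace (Collapse s) := by
  refine ⟨surjective_mk.forall.2 fun x => ?_⟩
  by_cases hx : x ∈ s
  · refine ⟨insert (mk s x) (mk s '' M), (hM.image continuous_mk).insert _,
      mem_of_superset
        ((isOpen_image_mk isOpen_interior (.inl hsM)).mem_nhds ⟨x, hsM hx, rfl⟩) ?_⟩
    rintro _ ⟨y, hy, rfl⟩
    rcases interior_subset hy with hy | hy
    exacts [.inl (mk_eq_mk.2 (.inr ⟨hy, hx⟩)), .inr ⟨y, hy, rfl⟩]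
  · obtain ⟨K, hK, hxK, hKs⟩ := exists_compact_subset hs.isOpen_compl hx
    exact ⟨mk s '' K, hK.image continuous_mk, mem_of_superset
      ((isOpen_image_mk isOpen_interior (.inr (subset_compl_iff_disjoint_right.1
        (interior_subset.trans hKs)))).mem_nhds ⟨x, hxK, rfl⟩) (image_mono interior_subset)⟩

theorem isCompact_of_isCompact_image_mk (hs : IsClosed s) {t : Set α} (ht : Disjoint t s)
    (h : IsCompact (mk s '' t)) : IsCompact t := by
  rw [← preimage_image_mk_of_disjoint ht]
  refine (isClosedMap_mk hs).isCompact_preimage_of_isCompact_fibers continuous_mk h ?_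
  rintro _ ⟨x, hx, rfl⟩
  rw [preimage_mk_singleton_of_notMem (ht.notMem_of_mem_left hx)]
  exact isCompact_singleton

end Collapse

theorem isPerfectMap_of_forall_subsingleton_nonCompactFibers {X Y : Type u}
    [TopologicalSpace X] [TopologicalSpace Y] [T2Space Y] [LocallyCompactSpace Y]
    (h : ∀ (Z : Type u) [TopologicalSpace Z] [T2Space Z] [LocallyCompactSpace Z] (g : X → Z),
      Continuous g → Function.Surjective g → IsClosedMap g → (nonCompactFibers g).Subsingleton)
    (hY : ¬CompactSpace Y) {f : X → Y} (hf : Continuous f) (hsurj : Function.Surjective f)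
    (hcl : IsClosedMap f) : IsPerfectMap f := by
  refine ⟨hcl, fun y₀ => by_contra fun hy₀ => ?_⟩
  obtain ⟨C, hC, hy₀C⟩ := exists_compact_mem_nhds y₀
  set s := (interior C)ᶜ
  have hs : IsClosed s := isOpen_interior.isClosed_compl
  have hsC : s ∪ C = univ := compl_subset_iff_union.1 (by rw [compl_compl]; exact interior_subset)
  have := Collapse.t2Space hs
  have := Collapse.weaklyLocallyCompactSpace hs hC (by simp [hsC])
  have hfs : ¬IsCompact (f ⁻¹' s) := fun hc => hY ⟨by
    rw [← hsC, ← image_preimage_eq s hsurj]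
    exact (hc.image hf).union hC⟩
  obtain ⟨x, hx⟩ : (f ⁻¹' s).Nonempty :=
    nonempty_iff_ne_empty.2 fun he => hfs (he ▸ isCompact_empty)
  have hy₀s : y₀ ∉ s := not_not.2 (mem_interior_iff_mem_nhds.2 hy₀C)
  have := h _ (Collapse.mk s ∘ f) (Collapse.continuous_mk.comp hf)
    (Collapse.surjective_mk.comp hsurj) ((Collapse.isClosedMap_mk hs).comp hcl)
    (show ¬IsCompact ((Collapse.mk s ∘ f) ⁻¹' {Collapse.mk s y₀}) by
      rwa [preimage_comp, Collapse.preimage_mk_singleton_of_notMem hy₀s])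
    (show ¬IsCompact ((Collapse.mk s ∘ f) ⁻¹' {Collapse.mk s (f x)}) by
      rwa [preimage_comp, Collapse.preimage_mk_singleton_of_mem (show f x ∈ s from hx)])
  rcases Collapse.mk_eq_mk.1 this with h | ⟨h, -⟩
  exacts [hy₀s (h ▸ hx), hy₀s h]

theorem IsJSpace.of_forall_isPerfectMap {X : Type u} [TopologicalSpace X] [T2Space X]
    [LocallyCompactSpace X]
    (h : ∀ (Y : Type u) [TopologicalSpace Y] [T2Space Y] [LocallyCompactSpace Y],
      ¬CompactSpace Y → ∀ f : X → Y, Continuous f → Function.Surjective f → IsClosedMap f →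
        IsPerfectMap f) : IsJSpace X := by
  intro A B hA hB hAB hABc
  by_contra! hnc
  obtain ⟨M, hM, hABM⟩ := exists_compact_superset hABc
  have hAM : A ⊆ interior (A ∪ M) := by
    have hO : Bᶜ ∪ interior M ⊆ interior (A ∪ M) :=
      interior_maximal (union_subset_union
        (compl_subset_iff_union.2 ((union_comm _ _).trans hAB)) interior_subset)
        (hB.isOpen_compl.union isOpen_interior)
    intro x hx
    by_cases hxB : x ∈ B
    exacts [hO (.inr (hABM ⟨hx, hxB⟩)), hO (.inl hxB)]
  have := Collapse.t2Space hA
  have := Collapse.weaklyLocallyCompactSpace hA hM hAM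
  have hY : ¬CompactSpace (Collapse A) := fun hY => hnc.2 <| by
    have hB' : IsCompact (B ∩ (interior M)ᶜ) :=
      Collapse.isCompact_of_isCompact_image_mk hA
        (disjoint_left.2 fun x hx hxA => hx.2 (hABM ⟨hxA, hx.1⟩))
        (Collapse.isClosedMap_mk hA _ (hB.inter isOpen_interior.isClosed_compl)).isCompact
    refine (hB'.union hM).of_isClosed_subset hB fun x hx => ?_
    by_cases hxM : x ∈ interior M
    exacts [.inr (interior_subset hxM), .inl ⟨hx, hxM⟩]
  obtain ⟨a, ha⟩ : A.Nonempty :=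
    nonempty_iff_ne_empty.2 fun he => hnc.1 (he ▸ isCompact_empty)
  have := (h _ hY _ Collapse.continuous_mk Collapse.surjective_mk
    (Collapse.isClosedMap_mk hA)).2 (Collapse.mk A a)
  rw [Collapse.preimage_mk_singleton_of_mem ha] at this
  exact hnc.1 this

/-- For a paracompact, locally compact Hausdorff space `X`, the following are equivalent:
(a) `X` is a J-space; (b) every closed map from `X` onto a non-compact, locally compact
Hausdorff space is perfect; (c) every closed map from `X` onto a locally compact
Hausdorff space has at most one non-compact fiber. -/
theorem paracompact_locallyCompact_isJSpace_tfae (X : Type u) [TopologicalSpace X]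
    [T2Space X] [ParacompactSpace X] [LocallyCompactSpace X] :
    List.TFAE [
      IsJSpace X,
      ∀ (Y : Type u) [TopologicalSpace Y] [T2Space Y] [LocallyCompactSpace Y],
        ¬CompactSpace Y → ∀ f : X → Y, Continuous f → Function.Surjective f →
          IsClosedMap f → IsPerfectMap f,
      ∀ (Y : Type u) [TopologicalSpace Y] [T2Space Y] [LocallyCompactSpace Y],
        ∀ f : X → Y, Continuous f → Function.Surjective f → IsClosedMap f →
          ∀ y₁ y₂ : Y, ¬IsCompact (f ⁻¹' {y₁}) → ¬IsCompact (f ⁻¹' {y₂}) → y₁ = y₂] := by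
  tfae_have 1 → 3 := fun hJ Y _ _ _ f hf _ hcl y₁ y₂ h₁ h₂ =>
    have := hJ.sigmaCompactSpace
    hJ.subsingleton_nonCompactFibers hf hcl h₁ h₂
  tfae_have 3 → 2 := fun h3 Y _ _ _ hY f hf hsurj hcl =>
    isPerfectMap_of_forall_subsingleton_nonCompactFibers
      (fun Z _ _ _ g hg hgs hgc _ h₁ _ h₂ => h3 Z g hg hgs hgc _ _ h₁ h₂) hY hf hsurj hcl
  tfae_have 2 → 1 := IsJSpace.of_forall_isPerfectMap
  tfae_finish
end

section
/- Let X be a Tychonoff (completely regular Hausdorff) space and let βX be its Stone–Čech compactification, with X identified with its image in βX under the canonical embedding. Then the remainder βX \ X is a boundary set for βX. -/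
/-- `A` is a *boundary set* for `Y` if `A` has empty interior and, whenever `U ⊇ A` is open
and `{W₁, W₂}` is a disjoint cover of `U \ A` by sets relatively open in `U \ A`, then no
point of `A` lies in `closure W₁ ∩ closure W₂`. -/
def IsBoundarySet {Y : Type*} [TopologicalSpace Y] (A : Set Y) : Prop :=
  interior A = ∅ ∧
  ∀ U : Set Y, IsOpen U → A ⊆ U →
    ∀ W₁ W₂ : Set Y,
      (∃ V₁ : Set Y, IsOpen V₁ ∧ W₁ = V₁ ∩ (U \ A)) →
      (∃ V₂ : Set Y, IsOpen V₂ ∧ W₂ = V₂ ∩ (U \ A)) →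
      W₁ ∪ W₂ = U \ A → Disjoint W₁ W₂ →
      ∀ y ∈ A, y ∉ closure W₁ ∩ closure W₂

/-- For a Tychonoff (completely regular Hausdorff) space `X`, the remainder `βX \ X` of
its Stone–Čech compactification is a boundary set for `βX`. -/
theorem stoneCech_remainder_isBoundarySet (X : Type*) [TopologicalSpace X] [T2Space X]
    [CompletelyRegularSpace X] :
    IsBoundarySet ((Set.range (stoneCechUnit : X → StoneCech X))ᶜ) := by
  classical
  set A : Set (StoneCech X) := (Set.range (stoneCechUnit : X → StoneCech X))ᶜ with hA
  constructor
  · rw [interior_compl, denseRange_stoneCechUnit.closure_range, Set.compl_univ]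
  rintro U hU hAU W₁ W₂ ⟨V₁, hV₁, rfl⟩ ⟨V₂, hV₂, rfl⟩ hcover hdisj y hy ⟨hy1, hy2⟩
  -- every point of the image of `X` is not in `A`
  have hmemA : ∀ x : X, stoneCechUnit x ∉ A := fun x h => h ⟨x, rfl⟩
  -- a separating function on `βX`
  obtain ⟨f, hf, hfy, hfK⟩ :=
    CompletelyRegularSpace.completely_regular y Uᶜ hU.isClosed_compl
      (by simp [hAU hy])
  -- the auxiliary function on `X`
  set g : X → ℝ := fun x =>
    if stoneCechUnit x ∈ U ∩ V₁ then (f (stoneCechUnit x) : ℝ) else 1 with hgdef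
  have hle : ∀ z : StoneCech X, ((f z : ℝ)) ≤ 1 := fun z => (f z).2.2
  have hge : ∀ z : StoneCech X, (0 : ℝ) ≤ (f z : ℝ) := fun z => (f z).2.1
  have hgmem : ∀ x : X, g x ∈ Set.Icc (0 : ℝ) 1 := by
    intro x
    simp only [hgdef]
    split_ifs with h
    · exact ⟨hge _, hle _⟩
    · exact ⟨zero_le_one, le_refl 1⟩
  -- value of g on points over `U ∩ V₂`
  have hgV₂ : ∀ x : X, stoneCechUnit x ∈ U ∩ V₂ → g x = 1 := by
    intro x hx
    have : stoneCechUnit x ∉ U ∩ V₁ := by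
      intro hx1
      have hW₁ : stoneCechUnit x ∈ V₁ ∩ (U \ A) := ⟨hx1.2, hx1.1, hmemA x⟩
      have hW₂ : stoneCechUnit x ∈ V₂ ∩ (U \ A) := ⟨hx.2, hx.1, hmemA x⟩
      exact (hdisj.ne_of_mem hW₁ hW₂) rfl
    simp only [hgdef]
    rw [if_neg this]
  have hgV₁ : ∀ x : X, stoneCechUnit x ∈ U ∩ V₁ → g x = (f (stoneCechUnit x) : ℝ) := by
    intro x hx
    simp only [hgdef]
    rw [if_pos hx]
  have hfg : ∀ x : X, (f (stoneCechUnit x) : ℝ) ≤ g x := by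
    intro x
    simp only [hgdef]
    split_ifs with h
    · exact le_refl _
    · exact hle _
  -- continuity of g
  have hfcont : Continuous fun x : X => (f (stoneCechUnit x) : ℝ) :=
    continuous_subtype_val.comp (hf.comp continuous_stoneCechUnit)
  have hgcont : Continuous g := by
    rw [continuous_iff_continuousAt]
    intro x
    by_cases hxU : stoneCechUnit x ∈ U
    · by_cases hxV : stoneCechUnit x ∈ V₁
      · -- locally equal to `f ∘ stoneCechUnit`
        have hnhds : (stoneCechUnit ⁻¹' (U ∩ V₁)) ∈ nhds x :=
          ((hU.inter hV₁).preimage continuous_stoneCechUnit).mem_nhds ⟨hxU, hxV⟩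
        exact hfcont.continuousAt.congr
          (Filter.eventuallyEq_of_mem hnhds fun z hz => (hgV₁ z hz).symm)
      · -- then the point lies over `W₂`, locally constant 1
        have hxUA : stoneCechUnit x ∈ U \ A := ⟨hxU, hmemA x⟩
        have hx2 : stoneCechUnit x ∈ V₂ ∩ (U \ A) := by
          rcases (hcover ▸ hxUA : stoneCechUnit x ∈ _ ∪ _) with h | h
          · exact absurd h.1 hxV
          · exact h
        have hnhds : (stoneCechUnit ⁻¹' (U ∩ V₂)) ∈ nhds x :=
          ((hU.inter hV₂).preimage continuous_stoneCechUnit).mem_nhds ⟨hxU, hx2.1⟩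
        exact continuousAt_const.congr
          (Filter.eventuallyEq_of_mem hnhds fun z hz => (hgV₂ z hz).symm)
    · -- over `Uᶜ`: squeeze between `f ∘ unit` and `1`, both tending to `1`
      have hfx : (f (stoneCechUnit x) : ℝ) = 1 := by
        have := hfK (Set.mem_compl hxU)
        rw [this]; rfl
      have hgx : g x = 1 := by
        have : stoneCechUnit x ∉ U ∩ V₁ := fun h => hxU h.1
        simp only [hgdef]
        rw [if_neg this]
      rw [ContinuousAt, hgx]
      refine tendsto_of_tendsto_of_tendsto_of_le_of_le
        (g := fun x : X => (f (stoneCechUnit x) : ℝ)) (h := fun _ : X => (1 : ℝ))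
        ?_ tendsto_const_nhds hfg (fun z => (hgmem z).2)
      have := hfcont.continuousAt (x := x)
      rwa [ContinuousAt, hfx] at this
  -- package g into the unit interval and extend over βX
  set g' : X → unitInterval := fun x => ⟨g x, hgmem x⟩ with hg'def
  have hg'cont : Continuous g' := hgcont.subtype_mk _
  set G : StoneCech X → unitInterval := stoneCechExtend hg'cont with hGdef
  have hGcont : Continuous G := continuous_stoneCechExtend hg'cont
  have hGunit : ∀ x : X, G (stoneCechUnit x) = g' x := fun x =>
    congrFun (stoneCechExtend_extends hg'cont) x
  -- G = 1 on W₂, hence G y = 1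
  have hGy1 : (G y : ℝ) = 1 := by
    have hclosed : IsClosed {z : StoneCech X | (G z : ℝ) = 1} :=
      isClosed_eq (continuous_subtype_val.comp hGcont) continuous_const
    have hsub : V₂ ∩ (U \ A) ⊆ {z : StoneCech X | (G z : ℝ) = 1} := by
      rintro z ⟨hzV, hzU, hzA⟩
      obtain ⟨x, rfl⟩ := not_not.mp hzA
      simp only [Set.mem_setOf_eq, hGunit x, hg'def]
      exact hgV₂ x ⟨hzU, hzV⟩
    exact hclosed.closure_subset_iff.mpr hsub hy2
  -- the neighborhood where f < 1/2
  set N : Set (StoneCech X) := (fun z => (f z : ℝ)) ⁻¹' Set.Iio (1 / 2) with hNdef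
  have hNopen : IsOpen N := isOpen_Iio.preimage (continuous_subtype_val.comp hf)
  have hyN : y ∈ N := by
    simp only [hNdef, Set.mem_preimage, Set.mem_Iio, hfy]
    norm_num
  -- y is in the closure of N ∩ W₁, where G ≤ 1/2
  have hyc : y ∈ closure (N ∩ (V₁ ∩ (U \ A))) := hNopen.inter_closure ⟨hyN, hy1⟩
  have hGy2 : (G y : ℝ) ≤ 1 / 2 := by
    have hclosed : IsClosed {z : StoneCech X | (G z : ℝ) ≤ 1 / 2} :=
      isClosed_le (continuous_subtype_val.comp hGcont) continuous_const
    have hsub : N ∩ (V₁ ∩ (U \ A)) ⊆ {z : StoneCech X | (G z : ℝ) ≤ 1 / 2} := by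
      rintro z ⟨hzN, hzV, hzU, hzA⟩
      obtain ⟨x, rfl⟩ := not_not.mp hzA
      simp only [Set.mem_setOf_eq, hGunit x, hg'def]
      rw [hgV₁ x ⟨hzU, hzV⟩]
      exact le_of_lt hzN
    exact hclosed.closure_subset_iff.mpr hsub hyc
  linarith
end

section
/- Let Y be a compactification of X, i.e., Y is a compact Hausdorff space containing X as a dense subspace. Suppose either that X is locally compact or that Y is metrizable. Then X is a J-space if and only if Y \ X is connected and Y \ X is a boundary set for Y. -/
open Set Topology


section aux

lemma jspace_bridge {Y : Type*} [TopologicalSpace Y] (X : Set Y) :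
    IsJSpace X ↔ ∀ C D : Set Y, C ⊆ X → D ⊆ X → closure C ∩ X ⊆ C → closure D ∩ X ⊆ D →
      C ∪ D = X → IsCompact (C ∩ D) → IsCompact C ∨ IsCompact D := by
  constructor
  · intro hJ C D hCX hDX hCc hDc hun hK
    set C' : Set X := Subtype.val ⁻¹' C with hC'
    set D' : Set X := Subtype.val ⁻¹' D with hD'
    have hpre : ∀ (E : Set Y), E ⊆ X → Subtype.val '' (Subtype.val ⁻¹' E : Set X) = E := by
      intro E hE
      rw [Set.image_preimage_eq_inter_range, Subtype.range_coe, inter_eq_left.mpr hE]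
    have hC'cl : IsClosed C' := by
      have : C' = Subtype.val ⁻¹' (closure C) := by
        ext x
        exact ⟨fun hx => subset_closure hx, fun hx => hCc ⟨hx, x.2⟩⟩
      rw [this]
      exact isClosed_closure.preimage continuous_subtype_val
    have hD'cl : IsClosed D' := by
      have : D' = Subtype.val ⁻¹' (closure D) := by
        ext x
        exact ⟨fun hx => subset_closure hx, fun hx => hDc ⟨hx, x.2⟩⟩
      rw [this]
      exact isClosed_closure.preimage continuous_subtype_val
    have hun' : C' ∪ D' = Set.univ := by
      ext x
      simpa using hun ▸ x.2
    have hK' : IsCompact (C' ∩ D') := by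
      rw [IsEmbedding.subtypeVal.isCompact_iff]
      have : C' ∩ D' = Subtype.val ⁻¹' (C ∩ D) := rfl
      rw [this, hpre _ (fun y hy => hCX hy.1)]
      exact hK
    rcases hJ C' D' hC'cl hD'cl hun' hK' with hc | hc
    · left
      have := IsEmbedding.subtypeVal.isCompact_iff.mp hc
      rwa [hpre _ hCX] at this
    · right
      have := IsEmbedding.subtypeVal.isCompact_iff.mp hc
      rwa [hpre _ hDX] at this
  · intro h A B hA hB hun hK
    set C : Set Y := Subtype.val '' A with hC
    set D : Set Y := Subtype.val '' B with hD
    have hCX : C ⊆ X := (image_subset_range _ _).trans (by rw [Subtype.range_coe])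
    have hDX : D ⊆ X := (image_subset_range _ _).trans (by rw [Subtype.range_coe])
    have hclo : ∀ (E : Set X), IsClosed E → closure (Subtype.val '' E) ∩ X ⊆ Subtype.val '' E := by
      intro E hE y hy
      have : (⟨y, hy.2⟩ : X) ∈ closure E := by
        rw [IsEmbedding.subtypeVal.closure_eq_preimage_closure_image E]
        exact hy.1
      rw [hE.closure_eq] at this
      exact ⟨_, this, rfl⟩
    have hun' : C ∪ D = X := by
      rw [hC, hD, ← image_union, hun, image_univ, Subtype.range_coe]
    have hK' : IsCompact (C ∩ D) := by
      rw [hC, hD, ← Set.image_inter Subtype.coe_injective]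
      exact hK.image continuous_subtype_val
    rcases h C D hCX hDX (hclo A hA) (hclo B hB) hun' hK' with hc | hc
    · exact Or.inl (IsEmbedding.subtypeVal.isCompact_iff.mpr hc)
    · exact Or.inr (IsEmbedding.subtypeVal.isCompact_iff.mpr hc)

lemma metrizable_sep {Y : Type*} [TopologicalSpace Y]
    (hm : TopologicalSpace.MetrizableSpace Y) {s t : Set Y} (hs : s.Nonempty) (ht : t.Nonempty)
    (h1 : Disjoint (closure s) t) (h2 : Disjoint s (closure t)) :
    ∃ u v : Set Y, IsOpen u ∧ IsOpen v ∧ s ⊆ u ∧ t ⊆ v ∧ Disjoint u v := by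
  letI := TopologicalSpace.metrizableSpaceMetric Y
  refine ⟨{y | Metric.infDist y s < Metric.infDist y t},
    {y | Metric.infDist y t < Metric.infDist y s},
    isOpen_lt (Metric.continuous_infDist_pt s) (Metric.continuous_infDist_pt t),
    isOpen_lt (Metric.continuous_infDist_pt t) (Metric.continuous_infDist_pt s), ?_, ?_, ?_⟩
  · intro y hy
    have h0 : Metric.infDist y s = 0 := Metric.infDist_zero_of_mem hy
    have hpos : 0 < Metric.infDist y t := by
      rw [← Metric.infDist_closure]
      refine (isClosed_closure.notMem_iff_infDist_pos (ht.closure)).mp ?_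
      exact fun hc => h2.ne_of_mem hy hc rfl
    simpa [h0] using hpos
  · intro y hy
    have h0 : Metric.infDist y t = 0 := Metric.infDist_zero_of_mem hy
    have hpos : 0 < Metric.infDist y s := by
      rw [← Metric.infDist_closure]
      refine (isClosed_closure.notMem_iff_infDist_pos (hs.closure)).mp ?_
      exact fun hc => h1.ne_of_mem hc hy rfl
    simpa [h0] using hpos
  · rw [Set.disjoint_left]
    intro y hy hy'
    simp only [mem_setOf_eq] at hy hy'
    exact absurd hy' (not_lt.mpr hy.le)

lemma dense_locallyCompact_isOpen {Y : Type*} [TopologicalSpace Y] [T2Space Y] {X : Set Y}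
    (hd : Dense X) (hlc : LocallyCompactSpace X) : IsOpen X := by
  rw [isOpen_iff_mem_nhds]
  intro x hx
  obtain ⟨K', hK'c, hK'nhds⟩ := exists_compact_mem_nhds (⟨x, hx⟩ : X)
  rw [mem_nhds_subtype] at hK'nhds
  obtain ⟨u, hu_nhds, hsub⟩ := hK'nhds
  obtain ⟨o, hou, hoopen, hxo⟩ := mem_nhds_iff.mp hu_nhds
  have hK : IsCompact (Subtype.val '' K') := hK'c.image continuous_subtype_val
  have hoX : o ∩ X ⊆ Subtype.val '' K' := fun y hy => ⟨⟨y, hy.2⟩, hsub (hou hy.1), rfl⟩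
  have hsubX : o ⊆ X := by
    refine (hd.open_subset_closure_inter hoopen).trans ?_
    refine (closure_mono hoX).trans ?_
    rw [hK.isClosed.closure_eq]
    exact (image_subset_range _ _).trans (by rw [Subtype.range_coe])
  exact Filter.mem_of_superset (hoopen.mem_nhds hxo) hsubX

end aux

/-- Let `Y` be a compactification of `X` (a compact Hausdorff space containing `X` as a
dense subspace), and suppose `X` is locally compact or `Y` is metrizable.  Then `X` is a
J-space iff `Y \ X` is connected (the empty set counting as connected) and is a boundary
set for `Y`. -/
theorem isJSpace_iff_remainder_connected_boundarySet {Y : Type*} [TopologicalSpace Y]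
    [CompactSpace Y] [T2Space Y] (X : Set Y) (hdense : Dense X)
    (h : LocallyCompactSpace X ∨ TopologicalSpace.MetrizableSpace Y) :
    IsJSpace X ↔ IsPreconnected Xᶜ ∧ IsBoundarySet Xᶜ := by
  rw [jspace_bridge]
  constructor
  · intro hJ
    have hbd : IsBoundarySet Xᶜ := by
      constructor
      · rw [interior_compl, hdense.closure_eq, compl_univ]
      · rintro U hU hAU W₁ W₂ ⟨V₁, hV₁, hW₁⟩ ⟨V₂, hV₂, hW₂⟩ hcov hdisj y hy hmem
        have hUcX : Uᶜ ⊆ X := fun z hz => by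
          by_contra hzX; exact hz (hAU hzX)
        have hSX : U \ Xᶜ ⊆ X := fun z hz => not_not.mp hz.2
        have hW₁S : W₁ ⊆ U \ Xᶜ := hW₁ ▸ inter_subset_right
        have hW₂S : W₂ ⊆ U \ Xᶜ := hW₂ ▸ inter_subset_right
        set C := Uᶜ ∪ W₁ with hCdef
        set D := Uᶜ ∪ W₂ with hDdef
        have hCX : C ⊆ X := union_subset hUcX (hW₁S.trans hSX)
        have hDX : D ⊆ X := union_subset hUcX (hW₂S.trans hSX)
        have hclos : ∀ (E V : Set Y), IsOpen V → E = V ∩ (U \ Xᶜ) →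
            ∀ (F : Set Y), W₁ ∪ W₂ = U \ Xᶜ → Disjoint F E → F ∪ E = U \ Xᶜ →
            closure (Uᶜ ∪ F) ∩ X ⊆ Uᶜ ∪ F := by
          intro E V hV hEV F _ hFE hFEcov z hz
          by_cases hzU : z ∈ U
          · have hzS : z ∈ U \ Xᶜ := ⟨hzU, not_not.mpr hz.2⟩
            rcases (Set.ext_iff.mp hFEcov z).mpr hzS with hzF | hzE
            · exact Or.inr hzF
            · exfalso
              have hzV : z ∈ V := (hEV ▸ hzE).1
              obtain ⟨w, hwVU, hwC⟩ := mem_closure_iff.mp hz.1 (V ∩ U) (hV.inter hU) ⟨hzV, hzU⟩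
              rcases hwC with hwUc | hwF
              · exact hwUc hwVU.2
              · have hwS : w ∈ U \ Xᶜ := (Set.ext_iff.mp hFEcov w).mp (Or.inl hwF)
                have hwE : w ∈ E := hEV ▸ (⟨hwVU.1, hwS⟩ : w ∈ V ∩ (U \ Xᶜ))
                exact Set.disjoint_left.mp hFE hwF hwE
          · exact Or.inl hzU
        have hclosC : closure C ∩ X ⊆ C :=
          hclos W₂ V₂ hV₂ hW₂ W₁ hcov hdisj hcov
        have hclosD : closure D ∩ X ⊆ D :=
          hclos W₁ V₁ hV₁ hW₁ W₂ hcov hdisj.symm (by rw [union_comm]; exact hcov)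
        have hunCD : C ∪ D = X := by
          apply Subset.antisymm (union_subset hCX hDX)
          intro z hzX
          by_cases hzU : z ∈ U
          · rcases (Set.ext_iff.mp hcov z).mpr ⟨hzU, not_not.mpr hzX⟩ with h' | h'
            · exact Or.inl (Or.inr h')
            · exact Or.inr (Or.inr h')
          · exact Or.inl (Or.inl hzU)
        have hCD : C ∩ D = Uᶜ := by
          have hd12 : ∀ z, z ∈ W₁ → z ∈ W₂ → False := fun z h h' =>
            Set.disjoint_left.mp hdisj h h'
          ext z
          constructor
          · rintro ⟨h1, h2⟩
            rcases h1 with h | h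
            · exact h
            · rcases h2 with h' | h'
              · exact h'
              · exact absurd h' (fun h'' => hd12 z h h'')
          · intro hz
            exact ⟨Or.inl hz, Or.inl hz⟩
        have hKcpt : IsCompact (C ∩ D) := by
          rw [hCD]; exact hU.isClosed_compl.isCompact
        rcases hJ C D hCX hDX hclosC hclosD hunCD hKcpt with hc | hc
        · have : closure W₁ ⊆ C := by
            rw [← hc.isClosed.closure_eq]
            exact closure_mono subset_union_right
          exact hy (hCX (this hmem.1))
        · have : closure W₂ ⊆ D := by
            rw [← hc.isClosed.closure_eq]
            exact closure_mono subset_union_right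
          exact hy (hDX (this hmem.2))
    refine ⟨?_, hbd⟩
    intro u v hu hv hcovuv hsu hsv
    by_contra hne
    rw [not_nonempty_iff_eq_empty] at hne
    obtain ⟨a, ha⟩ := hsu
    obtain ⟨b, hb⟩ := hsv
    set s := Xᶜ ∩ u with hsdef
    set t := Xᶜ ∩ v with htdef
    have hsv' : s ⊆ vᶜ := fun z hz hzv => by
      have : z ∈ Xᶜ ∩ (u ∩ v) := ⟨hz.1, hz.2, hzv⟩
      rw [hne] at this
      exact this
    have htu' : t ⊆ uᶜ := fun z hz hzu => by
      have : z ∈ Xᶜ ∩ (u ∩ v) := ⟨hz.1, hzu, hz.2⟩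
      rw [hne] at this
      exact this
    have h1 : Disjoint (closure s) t := by
      have hcl : closure s ⊆ vᶜ := closure_minimal hsv' hv.isClosed_compl
      exact Set.disjoint_left.mpr fun z hz hzt => (hcl hz) hzt.2
    have h2 : Disjoint s (closure t) := by
      have hcl : closure t ⊆ uᶜ := closure_minimal htu' hu.isClosed_compl
      exact Set.disjoint_left.mpr fun z hz hzt => (hcl hzt) hz.2
    obtain ⟨u', v', hu', hv', hsu', htv', hdisj'⟩ :
        ∃ u' v' : Set Y, IsOpen u' ∧ IsOpen v' ∧ s ⊆ u' ∧ t ⊆ v' ∧ Disjoint u' v' := by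
      rcases h with hlc | hm
      · have hXopen := dense_locallyCompact_isOpen hdense hlc
        have hXccl : IsClosed Xᶜ := hXopen.isClosed_compl
        have hscl : IsClosed s := by
          have : s = Xᶜ ∩ vᶜ := by
            ext z
            constructor
            · exact fun hz => ⟨hz.1, hsv' hz⟩
            · rintro ⟨hz1, hz2⟩
              exact ⟨hz1, (hcovuv hz1).resolve_right hz2⟩
          rw [this]
          exact hXccl.inter hv.isClosed_compl
        have htcl : IsClosed t := by
          have : t = Xᶜ ∩ uᶜ := by
            ext z
            constructor
            · exact fun hz => ⟨hz.1, htu' hz⟩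
            · rintro ⟨hz1, hz2⟩
              exact ⟨hz1, (hcovuv hz1).resolve_left hz2⟩
          rw [this]
          exact hXccl.inter hu.isClosed_compl
        have hdisjst : Disjoint s t := Set.disjoint_left.mpr fun z hz hzt => (hsv' hz) hzt.2
        obtain ⟨u', v', hu', hv', h1', h2', h3'⟩ :=
          SeparatedNhds.of_isCompact_isCompact hscl.isCompact htcl.isCompact hdisjst
        exact ⟨u', v', hu', hv', h1', h2', h3'⟩
      · exact metrizable_sep hm ⟨a, ha⟩ ⟨b, hb⟩ h1 h2
    set C := X ∩ u'ᶜ with hCdef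
    set D := X ∩ v'ᶜ with hDdef
    have hclosC : closure C ∩ X ⊆ C := fun z hz =>
      ⟨hz.2, closure_minimal inter_subset_right hu'.isClosed_compl hz.1⟩
    have hclosD : closure D ∩ X ⊆ D := fun z hz =>
      ⟨hz.2, closure_minimal inter_subset_right hv'.isClosed_compl hz.1⟩
    have hAsub : Xᶜ ⊆ u' ∪ v' := fun z hz =>
      (hcovuv hz).elim (fun h' => Or.inl (hsu' ⟨hz, h'⟩)) (fun h' => Or.inr (htv' ⟨hz, h'⟩))
    have hunCD : C ∪ D = X := by
      apply Subset.antisymm (union_subset inter_subset_left inter_subset_left)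
      intro z hzX
      by_cases hzu : z ∈ u'
      · exact Or.inr ⟨hzX, fun hzv => Set.disjoint_left.mp hdisj' hzu hzv⟩
      · exact Or.inl ⟨hzX, hzu⟩
    have hCD : C ∩ D = (u' ∪ v')ᶜ := by
      ext z
      constructor
      · rintro ⟨⟨_, hznu⟩, ⟨_, hznv⟩⟩
        rintro (h' | h')
        · exact hznu h'
        · exact hznv h'
      · intro hz
        have hzX : z ∈ X := by
          by_contra hzX
          exact hz (hAsub hzX)
        exact ⟨⟨hzX, fun h' => hz (Or.inl h')⟩, ⟨hzX, fun h' => hz (Or.inr h')⟩⟩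
    have hKcpt : IsCompact (C ∩ D) := by
      rw [hCD]
      exact ((hu'.union hv').isClosed_compl).isCompact
    rcases hJ C D inter_subset_left inter_subset_left hclosC hclosD hunCD hKcpt with hc | hc
    · have hb' : b ∈ closure (v' ∩ X) := hdense.open_subset_closure_inter hv' (htv' hb)
      have hsubC : v' ∩ X ⊆ C := fun z hz =>
        ⟨hz.2, fun hzu => Set.disjoint_left.mp hdisj' hzu hz.1⟩
      have hbC : b ∈ C := by
        rw [← hc.isClosed.closure_eq]
        exact closure_mono hsubC hb'
      exact hb.1 hbC.1
    · have ha' : a ∈ closure (u' ∩ X) := hdense.open_subset_closure_inter hu' (hsu' ha)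
      have hsubD : u' ∩ X ⊆ D := fun z hz =>
        ⟨hz.2, fun hzv => Set.disjoint_left.mp hdisj' hz.1 hzv⟩
      have haD : a ∈ D := by
        rw [← hc.isClosed.closure_eq]
        exact closure_mono hsubD ha'
      exact ha.1 haD.1
  · rintro ⟨hconn, hint, hbd⟩ C D hCX hDX hCc hDc hun hK
    by_contra hnc
    push_neg at hnc
    obtain ⟨hnC, hnD⟩ := hnc
    set K := C ∩ D with hKdef
    have hKX : K ⊆ X := fun z hz => hCX hz.1
    have hKcl : IsClosed K := hK.isClosed
    set U := Kᶜ with hUdef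
    have hAU : Xᶜ ⊆ U := fun z hz hzK => hz (hKX hzK)
    have hS : U \ Xᶜ = X \ K := by
      ext z
      simp only [mem_diff, mem_compl_iff, not_not, hUdef]
      tauto
    set W₁ := C \ K with hW₁def
    set W₂ := D \ K with hW₂def
    have hW₁eq : W₁ = (closure W₂)ᶜ ∩ (U \ Xᶜ) := by
      rw [hS]
      ext z
      constructor
      · rintro ⟨hzC, hzK⟩
        refine ⟨fun hzcl => ?_, hCX hzC, hzK⟩
        have hzD : z ∈ D := hDc ⟨closure_mono diff_subset hzcl, hCX hzC⟩
        exact hzK ⟨hzC, hzD⟩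
      · rintro ⟨hzcl, hzX, hzK⟩
        have hzD : z ∉ D := fun hzD => hzcl (subset_closure ⟨hzD, hzK⟩)
        have hzC : z ∈ C := by
          have : z ∈ C ∪ D := hun ▸ hzX
          exact this.resolve_right hzD
        exact ⟨hzC, hzK⟩
    have hW₂eq : W₂ = (closure W₁)ᶜ ∩ (U \ Xᶜ) := by
      rw [hS]
      ext z
      constructor
      · rintro ⟨hzD, hzK⟩
        refine ⟨fun hzcl => ?_, hDX hzD, hzK⟩
        have hzC : z ∈ C := hCc ⟨closure_mono diff_subset hzcl, hDX hzD⟩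
        exact hzK ⟨hzC, hzD⟩
      · rintro ⟨hzcl, hzX, hzK⟩
        have hzC : z ∉ C := fun hzC => hzcl (subset_closure ⟨hzC, hzK⟩)
        have hzD : z ∈ D := by
          have : z ∈ C ∪ D := hun ▸ hzX
          exact this.resolve_left hzC
        exact ⟨hzD, hzK⟩
    have hcov : W₁ ∪ W₂ = U \ Xᶜ := by
      rw [hS, hW₁def, hW₂def, ← union_diff_distrib, hun]
    have hdisj : Disjoint W₁ W₂ := by
      rw [Set.disjoint_left]
      rintro z ⟨hzC, hzK⟩ ⟨hzD, _⟩
      exact hzK ⟨hzC, hzD⟩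
    have hb := hbd U hKcl.isOpen_compl hAU W₁ W₂
      ⟨(closure W₂)ᶜ, isClosed_closure.isOpen_compl, hW₁eq⟩
      ⟨(closure W₁)ᶜ, isClosed_closure.isOpen_compl, hW₂eq⟩ hcov hdisj
    have hclWC : closure C ⊆ closure W₁ ∪ K := by
      have hsub : C ⊆ W₁ ∪ K := fun z hz => (em (z ∈ K)).elim Or.inr (fun h' => Or.inl ⟨hz, h'⟩)
      calc closure C ⊆ closure (W₁ ∪ K) := closure_mono hsub
        _ = closure W₁ ∪ K := by rw [closure_union, hKcl.closure_eq]
    have hclWD : closure D ⊆ closure W₂ ∪ K := by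
      have hsub : D ⊆ W₂ ∪ K := fun z hz => (em (z ∈ K)).elim Or.inr (fun h' => Or.inl ⟨hz, h'⟩)
      calc closure D ⊆ closure (W₂ ∪ K) := closure_mono hsub
        _ = closure W₂ ∪ K := by rw [closure_union, hKcl.closure_eq]
    have hne : ∀ (E : Set Y), E ⊆ X → (closure E ∩ X ⊆ E) → ¬IsCompact E →
        (Xᶜ ∩ closure E).Nonempty := by
      intro E hEX hEc hEnc
      by_contra hempty
      rw [not_nonempty_iff_eq_empty] at hempty
      have hsubX : closure E ⊆ X := fun z hz => by
        by_contra hzX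
        have : z ∈ Xᶜ ∩ closure E := ⟨hzX, hz⟩
        rw [hempty] at this
        exact this
      have hEcl : IsClosed E :=
        isClosed_of_closure_subset (fun z hz => hEc ⟨hz, hsubX hz⟩)
      exact hEnc hEcl.isCompact
    obtain ⟨p, hpX, hpC⟩ := hne C hCX hCc hnC
    obtain ⟨q, hqX, hqD⟩ := hne D hDX hDc hnD
    have hp1 : p ∈ Xᶜ ∩ closure W₁ :=
      ⟨hpX, (hclWC hpC).resolve_right (fun h' => hpX (hKX h'))⟩
    have hq2 : q ∈ Xᶜ ∩ closure W₂ :=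
      ⟨hqX, (hclWD hqD).resolve_right (fun h' => hqX (hKX h'))⟩
    have hcover : Xᶜ ⊆ closure W₁ ∪ closure W₂ := by
      intro z hz
      have hzcl : z ∈ closure C ∪ closure D := by
        rw [← closure_union, hun, hdense.closure_eq]
        exact mem_univ z
      rcases hzcl with h' | h'
      · exact Or.inl ((hclWC h').resolve_right (fun h'' => hz (hKX h'')))
      · exact Or.inr ((hclWD h').resolve_right (fun h'' => hz (hKX h'')))
    obtain ⟨y, hy, hy12⟩ := isPreconnected_closed_iff.mp hconn (closure W₁) (closure W₂)
      isClosed_closure isClosed_closure hcover ⟨p, hp1⟩ ⟨q, hq2⟩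
    exact hb y hy hy12
end

section
/- Let Y be a compactification of X, i.e., Y is a compact Hausdorff space containing X as a dense subspace. Suppose either that X is locally compact or that Y is metrizable. Then X is a strong J-space if and only if Y \ X is connected and Y \ X is a strong boundary set for Y. -/
/-- `A` is a *strong boundary set* for `Y` if `A` has empty interior and, whenever
`U ⊇ A` is open, every `y ∈ A` has an open neighborhood `V ⊆ U` with `V \ A` connected
(the empty set counting as connected). -/
def IsStrongBoundarySet {Y : Type*} [TopologicalSpace Y] (A : Set Y) : Prop :=
  interior A = ∅ ∧
  ∀ U : Set Y, IsOpen U → A ⊆ U →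
    ∀ y ∈ A, ∃ V : Set Y, IsOpen V ∧ y ∈ V ∧ V ⊆ U ∧ IsPreconnected (V \ A)

section Aux

open Set

/-- In a metric space, two separated sets have disjoint open neighborhoods. -/
lemma separatedNhds_of_separated {Y : Type*} [MetricSpace Y] {D E : Set Y}
    (hDE : closure D ∩ E = ∅) (hED : D ∩ closure E = ∅) : SeparatedNhds D E := by
  refine ⟨{y | EMetric.infEdist y D < EMetric.infEdist y E},
          {y | EMetric.infEdist y E < EMetric.infEdist y D},
          isOpen_lt EMetric.continuous_infEdist EMetric.continuous_infEdist,
          isOpen_lt EMetric.continuous_infEdist EMetric.continuous_infEdist, ?_, ?_, ?_⟩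
  · intro d hd
    have h1 : EMetric.infEdist d D = 0 := EMetric.infEdist_zero_of_mem hd
    have h2 : d ∉ closure E := fun hc => (eq_empty_iff_forall_notMem.1 hED d) ⟨hd, hc⟩
    have h3 : 0 < EMetric.infEdist d E := EMetric.infEdist_pos_iff_notMem_closure.2 h2
    simpa [h1] using h3
  · intro e he
    have h1 : EMetric.infEdist e E = 0 := EMetric.infEdist_zero_of_mem he
    have h2 : e ∉ closure D := fun hc => (eq_empty_iff_forall_notMem.1 hDE e) ⟨hc, he⟩
    have h3 : 0 < EMetric.infEdist e D := EMetric.infEdist_pos_iff_notMem_closure.2 h2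
    simpa [h1] using h3
  · rw [Set.disjoint_left]
    intro y hy hy'
    exact absurd hy' (by simpa using le_of_lt hy)

/-- A locally compact dense subspace of a Hausdorff space is open. -/
lemma isOpen_of_locallyCompact {Y : Type*} [TopologicalSpace Y] [T2Space Y] {X : Set Y}
    (hdense : Dense X) [LocallyCompactSpace X] : IsOpen X := by
  rw [← subset_interior_iff_isOpen]
  intro x hx
  obtain ⟨K, hKc, hK⟩ := exists_compact_mem_nhds (⟨x, hx⟩ : X)
  rw [nhds_subtype_eq_comap, Filter.mem_comap] at hK
  obtain ⟨t, ht, htK⟩ := hK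
  obtain ⟨O, hOt, hOo, hxO⟩ := mem_nhds_iff.1 ht
  have hKY : IsCompact ((↑) '' K : Set Y) := hKc.image continuous_subtype_val
  have hsub : O ⊆ (↑) '' K := by
    intro z hz
    have h1 : z ∈ closure (O ∩ X) := hdense.open_subset_closure_inter hOo hz
    have h2 : O ∩ X ⊆ (↑) '' K := by
      rintro w ⟨hwO, hwX⟩
      exact ⟨⟨w, hwX⟩, htK (hOt hwO), rfl⟩
    have h3 := closure_mono h2 h1
    rwa [hKY.isClosed.closure_eq] at h3
  have hOX : O ⊆ X := by
    intro z hz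
    obtain ⟨w, _, rfl⟩ := hsub hz
    exact w.2
  exact mem_interior.2 ⟨O, hOX, hOo, hxO⟩

/-- From a strong J-space structure on `X ⊆ Y`, extract `L` at the level of `Y`. -/
lemma exists_good_L {Y : Type*} [TopologicalSpace Y] {X : Set Y}
    (hJ : IsStrongJSpace X) {K : Set Y} (hK : IsCompact K) (hKX : K ⊆ X) :
    ∃ L : Set Y, IsCompact L ∧ L ⊆ X ∧ K ⊆ L ∧ IsPreconnected (X \ L) := by
  have h1 : IsCompact ((↑) ⁻¹' K : Set X) := by
    rw [Subtype.isCompact_iff, Subtype.image_preimage_coe,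
      Set.inter_eq_self_of_subset_right hKX]
    exact hK
  obtain ⟨L₀, hL₀c, hKL₀, hL₀conn⟩ := hJ _ h1
  refine ⟨(↑) '' L₀, hL₀c.image continuous_subtype_val, ?_, ?_, ?_⟩
  · rintro z ⟨w, _, rfl⟩; exact w.2
  · intro z hz; exact ⟨⟨z, hKX hz⟩, hKL₀ hz, rfl⟩
  · have h2 := Topology.IsInducing.subtypeVal.isPreconnected_image.2 hL₀conn
    rwa [← Set.range_diff_image Subtype.val_injective, Subtype.range_val] at h2

end Aux

/-- Let `Y` be a compactification of `X` (a compact Hausdorff space containing `X` as a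
dense subspace), and suppose `X` is locally compact or `Y` is metrizable.  Then `X` is a
strong J-space iff `Y \ X` is connected (the empty set counting as connected) and is a
strong boundary set for `Y`. -/
theorem isStrongJSpace_iff_remainder_connected_strongBoundarySet {Y : Type*}
    [TopologicalSpace Y] [CompactSpace Y] [T2Space Y] (X : Set Y) (hdense : Dense X)
    (h : LocallyCompactSpace X ∨ TopologicalSpace.MetrizableSpace Y) :
    IsStrongJSpace X ↔ IsPreconnected Xᶜ ∧ IsStrongBoundarySet Xᶜ := by
  constructor
  · intro hJ
    have hint : interior Xᶜ = ∅ := by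
      rw [interior_compl, hdense.closure_eq, Set.compl_univ]
    refine ⟨?_, hint, ?_⟩
    · -- `Xᶜ` is preconnected
      intro u v hu hv hsub ⟨a, haA, hau⟩ ⟨b, hbA, hbv⟩
      by_contra hne
      rw [Set.not_nonempty_iff_eq_empty] at hne
      set D := Xᶜ ∩ u with hD
      set E := Xᶜ ∩ v with hE
      have hDE : closure D ∩ E = ∅ := by
        rw [Set.eq_empty_iff_forall_notMem]
        rintro z ⟨hzD, hzA, hzv⟩
        obtain ⟨w, hwv, hwA, hwu⟩ := (mem_closure_iff.1 hzD) v hv hzv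
        exact (Set.eq_empty_iff_forall_notMem.1 hne w) ⟨hwA, hwu, hwv⟩
      have hED : D ∩ closure E = ∅ := by
        rw [Set.eq_empty_iff_forall_notMem]
        rintro z ⟨⟨hzA, hzu⟩, hzE⟩
        obtain ⟨w, hwu, hwA, hwv⟩ := (mem_closure_iff.1 hzE) u hu hzu
        exact (Set.eq_empty_iff_forall_notMem.1 hne w) ⟨hwA, hwu, hwv⟩
      have hsep : SeparatedNhds D E := by
        rcases h with hlc | hmet
        · have hXopen : IsOpen X := isOpen_of_locallyCompact hdense
          have hAc : IsClosed (Xᶜ : Set Y) := hXopen.isClosed_compl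
          have hclD : closure D ⊆ D := by
            intro z hz
            have hzA : z ∈ Xᶜ := by
              have h3 := closure_mono Set.inter_subset_left hz
              rwa [hAc.closure_eq] at h3
            rcases hsub hzA with hzu | hzv
            · exact ⟨hzA, hzu⟩
            · exact absurd (Set.mem_inter hz (Set.mem_inter hzA hzv))
                (Set.eq_empty_iff_forall_notMem.1 hDE z)
          have hclE : closure E ⊆ E := by
            intro z hz
            have hzA : z ∈ Xᶜ := by
              have h3 := closure_mono Set.inter_subset_left hz
              rwa [hAc.closure_eq] at h3
            rcases hsub hzA with hzu | hzv
            · exact absurd (Set.mem_inter (Set.mem_inter hzA hzu) hz)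
                (Set.eq_empty_iff_forall_notMem.1 hED z)
            · exact ⟨hzA, hzv⟩
          have hdis : Disjoint D E := by
            rw [Set.disjoint_left]
            rintro z ⟨hzA, hzu⟩ ⟨_, hzv⟩
            exact (Set.eq_empty_iff_forall_notMem.1 hne z) ⟨hzA, hzu, hzv⟩
          exact SeparatedNhds.of_isCompact_isCompact
            (isClosed_of_closure_subset hclD).isCompact
            (isClosed_of_closure_subset hclE).isCompact hdis
        · letI := TopologicalSpace.metrizableSpaceMetric Y
          exact separatedNhds_of_separated hDE hED
      obtain ⟨u₂, v₂, hu₂, hv₂, hDu₂, hEv₂, huv₂⟩ := hsep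
      have hAcover : Xᶜ ⊆ u₂ ∪ v₂ := by
        intro z hz
        rcases hsub hz with h1 | h1
        · exact Or.inl (hDu₂ ⟨hz, h1⟩)
        · exact Or.inr (hEv₂ ⟨hz, h1⟩)
      have hKX : (u₂ ∪ v₂)ᶜ ⊆ X := fun z hz => by
        by_contra hzX; exact hz (hAcover hzX)
      have hKc : IsCompact (u₂ ∪ v₂)ᶜ := ((hu₂.union hv₂).isClosed_compl).isCompact
      obtain ⟨L, hLc, hLX, hKL, hLconn⟩ := exists_good_L hJ hKc hKX
      have hYconn : IsPreconnected Lᶜ := by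
        refine hLconn.subset_closure (fun z hz => hz.2) ?_
        intro z hz
        have h3 := hdense.open_subset_closure_inter hLc.isClosed.isOpen_compl hz
        rwa [Set.inter_comm, ← Set.diff_eq] at h3
      have hsub2 : Lᶜ ⊆ u₂ ∪ v₂ := fun z hz => by
        by_contra hc; exact hz (hKL hc)
      have h1 : (Lᶜ ∩ u₂).Nonempty := ⟨a, fun hL => haA (hLX hL), hDu₂ ⟨haA, hau⟩⟩
      have h2 : (Lᶜ ∩ v₂).Nonempty := ⟨b, fun hL => hbA (hLX hL), hEv₂ ⟨hbA, hbv⟩⟩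
      obtain ⟨z, _, hzu, hzv⟩ := hYconn u₂ v₂ hu₂ hv₂ hsub2 h1 h2
      exact Set.disjoint_left.1 huv₂ hzu hzv
    · -- strong boundary neighborhoods
      intro U hU hAU y hy
      have hKc : IsCompact Uᶜ := hU.isClosed_compl.isCompact
      have hKX : Uᶜ ⊆ X := fun z hz => by
        by_contra hzX; exact hz (hAU hzX)
      obtain ⟨L, hLc, hLX, hKL, hLconn⟩ := exists_good_L hJ hKc hKX
      refine ⟨Lᶜ, hLc.isClosed.isOpen_compl, fun hyL => hy (hLX hyL), ?_, ?_⟩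
      · intro z hz
        by_contra hzU; exact hz (hKL hzU)
      · have h3 : Lᶜ \ Xᶜ = X \ L := by
          ext z
          simp only [Set.mem_diff, Set.mem_compl_iff, not_not]
          tauto
        rwa [h3]
  · rintro ⟨hA, hint, hsb⟩ K hK
    have hK' : IsCompact ((↑) '' K : Set Y) := hK.image continuous_subtype_val
    have hUo : IsOpen ((↑) '' K : Set Y)ᶜ := hK'.isClosed.isOpen_compl
    have hAU : Xᶜ ⊆ ((↑) '' K : Set Y)ᶜ := by
      intro z hz hc
      obtain ⟨w, _, rfl⟩ := hc
      exact hz w.2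
    choose! V hVo hyV hVU hVconn using hsb _ hUo hAU
    set W := ⋃ y ∈ Xᶜ, V y with hWdef
    have hWo : IsOpen W := isOpen_biUnion fun y hy => hVo y hy
    have hAW : Xᶜ ⊆ W := fun y hy => Set.mem_biUnion hy (hyV y hy)
    have hWcX : Wᶜ ⊆ X := fun z hz => by
      by_contra hc; exact hz (hAW hc)
    refine ⟨(↑) ⁻¹' Wᶜ, ?_, ?_, ?_⟩
    · rw [Subtype.isCompact_iff, Subtype.image_preimage_coe,
        Set.inter_eq_self_of_subset_right hWcX]
      exact hWo.isClosed_compl.isCompact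
    · intro k hk hkW
      obtain ⟨y, hy, hky⟩ := Set.mem_iUnion₂.1 hkW
      exact hVU y hy hky ⟨k, hk, rfl⟩
    · rw [show ((↑) ⁻¹' Wᶜ : Set X)ᶜ = (↑) ⁻¹' W by rw [← Set.preimage_compl, compl_compl],
        ← Topology.IsInducing.subtypeVal.isPreconnected_image, Subtype.image_preimage_coe]
      -- show `X ∩ W` is preconnected
      intro u v hu hv hsub ⟨p, hpXW, hpu⟩ ⟨q, hqXW, hqv⟩
      by_contra hne
      rw [Set.not_nonempty_iff_eq_empty] at hne
      have hPsub : ∀ y ∈ Xᶜ, V y ∩ X ⊆ X ∩ W := fun y hy z hz =>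
        ⟨hz.2, Set.mem_biUnion hy hz.1⟩
      have hPconn : ∀ y ∈ Xᶜ, IsPreconnected (V y ∩ X) := by
        intro y hy
        have h3 := hVconn y hy
        rwa [Set.diff_compl] at h3
      have hcase : ∀ y ∈ Xᶜ, V y ∩ X ⊆ u ∨ V y ∩ X ⊆ v := by
        intro y hy
        by_contra hc
        push_neg at hc
        obtain ⟨hcu, hcv⟩ := hc
        obtain ⟨p1, hp1, hp1u⟩ := Set.not_subset.1 hcu
        obtain ⟨p2, hp2, hp2v⟩ := Set.not_subset.1 hcv
        have hp1v : p1 ∈ v := (hsub (hPsub y hy hp1)).resolve_left hp1u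
        have hp2u : p2 ∈ u := (hsub (hPsub y hy hp2)).resolve_right hp2v
        obtain ⟨z, hz1, hz2⟩ := hPconn y hy u v hu hv
          (fun w hw => hsub (hPsub y hy hw)) ⟨p2, hp2, hp2u⟩ ⟨p1, hp1, hp1v⟩
        exact (Set.eq_empty_iff_forall_notMem.1 hne z) ⟨hPsub y hy hz1, hz2⟩
      -- find witnesses on each side
      obtain ⟨y₀, hy₀A, hpy₀⟩ := Set.mem_iUnion₂.1 hpXW.2
      have hy₀u : V y₀ ∩ X ⊆ u := by
        rcases hcase y₀ hy₀A with hc | hc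
        · exact hc
        · exact absurd ((Set.eq_empty_iff_forall_notMem.1 hne p))
            (by exact fun hcon => hcon ⟨hpXW, hpu, hc ⟨hpy₀, hpXW.1⟩⟩)
      obtain ⟨y₁, hy₁A, hqy₁⟩ := Set.mem_iUnion₂.1 hqXW.2
      have hy₁v : V y₁ ∩ X ⊆ v := by
        rcases hcase y₁ hy₁A with hc | hc
        · exact absurd ((Set.eq_empty_iff_forall_notMem.1 hne q))
            (by exact fun hcon => hcon ⟨hqXW, hc ⟨hqy₁, hqXW.1⟩, hqv⟩)
        · exact hc
      -- use preconnectedness of `Xᶜ`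
      set Su := {y | y ∈ Xᶜ ∧ V y ∩ X ⊆ u} with hSu
      set Sv := {y | y ∈ Xᶜ ∧ V y ∩ X ⊆ v} with hSv
      have hu' : IsOpen (⋃ y ∈ Su, V y) := isOpen_biUnion fun y hy => hVo y hy.1
      have hv' : IsOpen (⋃ y ∈ Sv, V y) := isOpen_biUnion fun y hy => hVo y hy.1
      have hcov : Xᶜ ⊆ (⋃ y ∈ Su, V y) ∪ (⋃ y ∈ Sv, V y) := by
        intro y hy
        rcases hcase y hy with hc | hc
        · exact Or.inl (Set.mem_biUnion ⟨hy, hc⟩ (hyV y hy))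
        · exact Or.inr (Set.mem_biUnion ⟨hy, hc⟩ (hyV y hy))
      have hnu : (Xᶜ ∩ ⋃ y ∈ Su, V y).Nonempty :=
        ⟨y₀, hy₀A, Set.mem_biUnion ⟨hy₀A, hy₀u⟩ (hyV y₀ hy₀A)⟩
      have hnv : (Xᶜ ∩ ⋃ y ∈ Sv, V y).Nonempty :=
        ⟨y₁, hy₁A, Set.mem_biUnion ⟨hy₁A, hy₁v⟩ (hyV y₁ hy₁A)⟩
      obtain ⟨a, _, hau', hav'⟩ := hA _ _ hu' hv' hcov hnu hnv
      obtain ⟨yu, hyu, hayu⟩ := Set.mem_iUnion₂.1 hau'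
      obtain ⟨yv, hyv, hayv⟩ := Set.mem_iUnion₂.1 hav'
      obtain ⟨z, ⟨hz1, hz2⟩, hzX⟩ := hdense.inter_open_nonempty _
        ((hVo yu hyu.1).inter (hVo yv hyv.1)) ⟨a, hayu, hayv⟩
      exact (Set.eq_empty_iff_forall_notMem.1 hne z)
        ⟨hPsub yu hyu.1 ⟨hz1, hzX⟩, hyu.2 ⟨hz1, hzX⟩, hyv.2 ⟨hz2, hzX⟩⟩
end

section
/- If X is a Hausdorff J-space and f : X → Y is a surjective boundary-perfect map onto a Hausdorff space Y, then Y is a J-space. -/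
/-- J-spaces are preserved by boundary-perfect images. -/
theorem isJSpace_of_boundaryPerfect_image {X Y : Type*} [TopologicalSpace X] [T2Space X]
    [TopologicalSpace Y] [T2Space Y] (hX : IsJSpace X) (f : X → Y) (hf : Continuous f)
    (hsurj : Function.Surjective f) (hbp : IsBoundaryPerfectMap f) : IsJSpace Y := by
  intro A B hA hB hAB hK
  set K : Set Y := A ∩ B with hKdef
  set U : Set X := ⋃ y ∈ K, interior (f ⁻¹' {y}) with hUdef
  have hUopen : IsOpen U := isOpen_biUnion fun y _ => isOpen_interior
  have hUK : U ⊆ f ⁻¹' K := by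
    intro x hx
    obtain ⟨y, hy, hxy⟩ := Set.mem_iUnion₂.mp hx
    have : f x = y := by simpa using interior_subset hxy
    simpa [this] using hy
  set A' : Set X := f ⁻¹' A with hA'def
  set B' : Set X := f ⁻¹' B ∩ Uᶜ with hB'def
  have hA'closed : IsClosed A' := hA.preimage hf
  have hB'closed : IsClosed B' := (hB.preimage hf).inter hUopen.isClosed_compl
  have hcover : A' ∪ B' = Set.univ := by
    ext x
    simp only [Set.mem_univ, iff_true, Set.mem_union, hA'def, hB'def, Set.mem_inter_iff,
      Set.mem_preimage, Set.mem_compl_iff]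
    by_cases hxA : f x ∈ A
    · exact Or.inl hxA
    · refine Or.inr ⟨?_, ?_⟩
      · have := hAB ▸ Set.mem_univ (f x)
        rcases (Set.ext_iff.mp hAB (f x)).mpr trivial with h | h
        · exact absurd h hxA
        · exact h
      · intro hxU
        exact hxA (hUK hxU).1
  -- the set C = A' ∩ B'
  set C : Set X := f ⁻¹' K ∩ Uᶜ with hCdef
  have hinter : A' ∩ B' = C := by
    ext x
    simp only [hA'def, hB'def, hCdef, hKdef, Set.mem_inter_iff, Set.mem_preimage,
      Set.mem_compl_iff]
    tauto
  have hCclosed : IsClosed C := ((hA.inter hB).preimage hf).inter hUopen.isClosed_compl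
  -- C is compact: restriction of f to C is proper
  have hCcompact : IsCompact C := by
    set g : C → Y := fun x => f x with hgdef
    have hgc : Continuous g := hf.comp continuous_subtype_val
    have hginto : ∀ x : C, g x ∈ K := fun x => x.2.1
    have hgproper : IsProperMap g := by
      rw [isProperMap_iff_isClosedMap_and_compact_fibers]
      refine ⟨hgc, hbp.1.comp hCclosed.isClosedEmbedding_subtypeVal.isClosedMap, ?_⟩
      intro y
      rw [hCclosed.isClosedEmbedding_subtypeVal.isEmbedding.isCompact_iff]
      have himg : Subtype.val '' (g ⁻¹' {y}) = C ∩ f ⁻¹' {y} := by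
        ext x
        simp only [Set.mem_image, Set.mem_preimage, Set.mem_singleton_iff, Set.mem_inter_iff]
        constructor
        · rintro ⟨⟨x, hx⟩, hfx, rfl⟩; exact ⟨hx, hfx⟩
        · rintro ⟨hx, hfx⟩; exact ⟨⟨x, hx⟩, hfx, rfl⟩
      rw [himg]
      by_cases hy : y ∈ K
      · refine (hbp.2 y).of_isClosed_subset (hCclosed.inter (isClosed_singleton.preimage hf)) ?_
        rintro x ⟨⟨_, hxU⟩, hfx⟩
        have hxf : x ∈ f ⁻¹' {y} := hfx
        have hxni : x ∉ interior (f ⁻¹' {y}) := by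
          intro hxi
          exact hxU (Set.mem_biUnion hy hxi)
        rw [frontier, (isClosed_singleton.preimage hf).closure_eq]
        exact ⟨hxf, hxni⟩
      · convert isCompact_empty
        ext x
        simp only [Set.mem_inter_iff, Set.mem_preimage, Set.mem_singleton_iff, Set.mem_empty_iff_false,
          iff_false, not_and]
        intro hxC hfx
        exact hy (hfx ▸ hxC.1)
    have : g ⁻¹' K = Set.univ := Set.eq_univ_of_forall fun x => hginto x
    have hcomp : IsCompact (g ⁻¹' K) := hgproper.isCompact_preimage hK
    rw [this] at hcomp
    exact isCompact_iff_isCompact_univ.mpr hcomp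
  rcases hX A' B' hA'closed hB'closed hcover (hinter ▸ hCcompact) with h | h
  · left
    have : f '' A' = A := Set.image_preimage_eq A hsurj
    exact this ▸ h.image hf
  · right
    refine ((h.image hf).union hK).of_isClosed_subset hB ?_
    intro y hy
    obtain ⟨x, rfl⟩ := hsurj y
    by_cases hxU : x ∈ U
    · exact Or.inr (hUK hxU)
    · exact Or.inl ⟨x, ⟨hy, hxU⟩, rfl⟩
end

section
/- If f : X → Y is a surjective, monotone, perfect map between Hausdorff spaces and Y is a J-space, then X is a J-space. -/
/-!
If `{A, B}` is a closed cover of `X`, then `{f A, f B}` is a closed cover of `Y`. A point of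
`f A ∩ f B` has a fibre that is connected, covered by the closed sets `A` and `B`, and meets both,
so it meets `A ∩ B`; hence `f A ∩ f B = f (A ∩ B)` is compact. If, say, `f A` is compact, then `A`
is a closed subset of the compact set `f⁻¹ (f A)`, hence compact.
-/

open Set

theorem IsPerfectMap.isProperMap {X Y : Type*} [TopologicalSpace X] [TopologicalSpace Y]
    {f : X → Y} (hperf : IsPerfectMap f) (hf : Continuous f) : IsProperMap f :=
  isProperMap_iff_isClosedMap_and_compact_fibers.mpr ⟨hf, hperf⟩

theorem image_inter_image_eq_image_inter_of_isPreconnected_fiber {X Y : Type*}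
    [TopologicalSpace X] {f : X → Y} (hmono : ∀ y : Y, IsPreconnected (f ⁻¹' {y}))
    {A B : Set X} (hA : IsClosed A) (hB : IsClosed B) (hAB : A ∪ B = univ) :
    f '' A ∩ f '' B = f '' (A ∩ B) := by
  refine Subset.antisymm ?_ (image_inter_subset f A B)
  rintro _ ⟨⟨a, haA, rfl⟩, b, hbB, hb⟩
  obtain ⟨x, hx, hxA, hxB⟩ := isPreconnected_closed_iff.mp (hmono (f a)) A B hA hB
    (hAB ▸ subset_univ _) ⟨a, rfl, haA⟩ ⟨b, hb, hbB⟩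
  exact ⟨x, ⟨hxA, hxB⟩, hx⟩

theorem IsJSpace.of_isProperMap {X Y : Type*} [TopologicalSpace X] [TopologicalSpace Y]
    {f : X → Y} (hY : IsJSpace Y) (hf : IsProperMap f) (hsurj : Function.Surjective f)
    (hmono : ∀ y : Y, IsPreconnected (f ⁻¹' {y})) : IsJSpace X := by
  intro A B hA hB hAB hABc
  have hcover : f '' A ∪ f '' B = univ := by
    rw [← image_union, hAB, image_univ, hsurj.range_eq]
  have hcompact : IsCompact (f '' A ∩ f '' B) := by
    rw [image_inter_image_eq_image_inter_of_isPreconnected_fiber hmono hA hB hAB]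
    exact hABc.image hf.continuous
  refine (hY _ _ (hf.isClosedMap A hA) (hf.isClosedMap B hB) hcover hcompact).imp ?_ ?_
  · exact fun h ↦ (hf.isCompact_preimage h).of_isClosed_subset hA (subset_preimage_image f A)
  · exact fun h ↦ (hf.isCompact_preimage h).of_isClosed_subset hB (subset_preimage_image f B)

theorem isJSpace_of_monotone_perfect_preimage_general {X Y : Type*} [TopologicalSpace X]
    [TopologicalSpace Y] (f : X → Y) (hf : Continuous f)
    (hsurj : Function.Surjective f) (hmono : ∀ y : Y, IsPreconnected (f ⁻¹' {y}))
    (hperf : IsPerfectMap f) (hY : IsJSpace Y) : IsJSpace X :=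
  hY.of_isProperMap (hperf.isProperMap hf) hsurj hmono

/-- J-spaces are preserved by monotone, perfect pre-images. -/
theorem isJSpace_of_monotone_perfect_preimage {X Y : Type*} [TopologicalSpace X]
    [T2Space X] [TopologicalSpace Y] [T2Space Y] (f : X → Y) (hf : Continuous f)
    (hsurj : Function.Surjective f) (hmono : ∀ y : Y, IsPreconnected (f ⁻¹' {y}))
    (hperf : IsPerfectMap f) (hY : IsJSpace Y) : IsJSpace X :=
  isJSpace_of_monotone_perfect_preimage_general f hf hsurj hmono hperf hY
end

section
/- If f : X → Y is a surjective, monotone, perfect map between Hausdorff spaces and Y is a strong J-space, then X is a strong J-space. -/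
/-- Preimage of a preconnected set under a closed map with preconnected fibers is
preconnected. -/
theorem isPreconnected_preimage_of_monotone_closed {X Y : Type*} [TopologicalSpace X]
    [TopologicalSpace Y] {f : X → Y} (hf : IsClosedMap f)
    (hfib : ∀ y : Y, IsPreconnected (f ⁻¹' {y})) {s : Set Y} (hs : IsPreconnected s)
    (hsf : s ⊆ Set.range f) : IsPreconnected (f ⁻¹' s) := by
  rw [isPreconnected_closed_iff]
  intro u v hu hv hsuv hsu hsv
  have himg : f '' (f ⁻¹' s) = s := Set.image_preimage_eq_of_subset hsf
  obtain ⟨y, hys, ⟨a, hau, ha⟩, ⟨b, hbv, hb⟩⟩ :=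
    isPreconnected_closed_iff.1 hs (f '' u) (f '' v) (hf u hu) (hf v hv)
      (by simpa only [himg, Set.image_union] using Set.image_mono (f := f) hsuv)
      (by simpa only [Set.image_preimage_inter] using hsu.image f)
      (by simpa only [Set.image_preimage_inter] using hsv.image f)
  obtain ⟨x, hx, hxu, hxv⟩ :=
    isPreconnected_closed_iff.1 (hfib y) u v hu hv
      (fun z hz => hsuv (by simp only [Set.mem_preimage] at hz ⊢; rw [hz]; exact hys))
      ⟨a, ha, hau⟩ ⟨b, hb, hbv⟩
  exact ⟨x, by simp only [Set.mem_preimage] at hx ⊢; rw [hx]; exact hys, hxu, hxv⟩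

/-- Strong J-spaces are preserved by monotone, perfect pre-images. -/
theorem isStrongJSpace_of_monotone_perfect_preimage {X Y : Type*} [TopologicalSpace X]
    [T2Space X] [TopologicalSpace Y] [T2Space Y] (f : X → Y) (hf : Continuous f)
    (hsurj : Function.Surjective f) (hmono : ∀ y : Y, IsPreconnected (f ⁻¹' {y}))
    (hperf : IsPerfectMap f) (hY : IsStrongJSpace Y) : IsStrongJSpace X := by
  have hproper : IsProperMap f :=
    isProperMap_iff_isClosedMap_and_compact_fibers.2 ⟨hf, hperf.1, hperf.2⟩
  intro K hK
  obtain ⟨L', hL'c, hL'sub, hL'conn⟩ := hY (f '' K) (hK.image hf)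
  refine ⟨f ⁻¹' L', hproper.isCompact_preimage hL'c,
    fun x hx => hL'sub (Set.mem_image_of_mem f hx), ?_⟩
  have : (f ⁻¹' L')ᶜ = f ⁻¹' L'ᶜ := rfl
  rw [this]
  exact isPreconnected_preimage_of_monotone_closed hperf.1 hmono hL'conn
    (fun y _ => hsurj y)
end

section
/- Let X₁ and X₂ be connected Hausdorff spaces. Then X₁ × X₂ is a J-space if and only if either both X₁ and X₂ are J-spaces, or both X₁ and X₂ are non-compact. -/
open Set

/-- Every compact space is a J-space. -/
lemma isJSpace_of_compactSpace {X : Type*} [TopologicalSpace X] [CompactSpace X] :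
    IsJSpace X := fun _ _ hA _ _ _ => Or.inl hA.isCompact

/-- Every strong J-space is a J-space. -/
lemma IsStrongJSpace.isJSpace {X : Type*} [TopologicalSpace X]
    (h : IsStrongJSpace X) : IsJSpace X := by
  intro A B hA hB hAB hcap
  obtain ⟨L, hL, hKL, hconn⟩ := h _ hcap
  have hsub : Lᶜ ⊆ Aᶜ ∪ Bᶜ := by
    intro x hx
    by_contra hc
    simp only [mem_union, mem_compl_iff, not_or, not_not] at hc
    exact hx (hKL ⟨hc.1, hc.2⟩)
  have hdisj : Disjoint Aᶜ Bᶜ := by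
    rw [disjoint_iff_inter_eq_empty, ← compl_union, hAB, compl_univ]
  rcases hconn.subset_or_subset hA.isOpen_compl hB.isOpen_compl hdisj hsub with h1 | h1
  · exact Or.inl (hL.of_isClosed_subset hA (compl_subset_compl.mp h1))
  · exact Or.inr (hL.of_isClosed_subset hB (compl_subset_compl.mp h1))

/-- Being a J-space transfers along homeomorphisms. -/
lemma IsJSpace.of_homeomorph {X Y : Type*} [TopologicalSpace X] [TopologicalSpace Y]
    (h : IsJSpace X) (e : X ≃ₜ Y) : IsJSpace Y := by
  intro A B hA hB hAB hcap
  have hu : e ⁻¹' A ∪ e ⁻¹' B = univ := by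
    rw [← preimage_union, hAB, preimage_univ]
  have hc : IsCompact (e ⁻¹' A ∩ e ⁻¹' B) := by
    rw [← preimage_inter]
    exact e.isCompact_preimage.mpr hcap
  rcases h (e ⁻¹' A) (e ⁻¹' B) (hA.preimage e.continuous) (hB.preimage e.continuous) hu hc with
    h1 | h1
  · left
    have := h1.image e.continuous
    rwa [e.image_preimage] at this
  · right
    have := h1.image e.continuous
    rwa [e.image_preimage] at this

/-- The product of two noncompact connected spaces is a strong J-space. -/
lemma isStrongJSpace_prod {X Y : Type*} [TopologicalSpace X] [TopologicalSpace Y]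
    [ConnectedSpace X] [ConnectedSpace Y] (hX : ¬CompactSpace X) (hY : ¬CompactSpace Y) :
    IsStrongJSpace (X × Y) := by
  intro K hK
  refine ⟨(Prod.fst '' K) ×ˢ (Prod.snd '' K),
    (hK.image continuous_fst).prod (hK.image continuous_snd),
    fun p hp => ⟨⟨p, hp, rfl⟩, ⟨p, hp, rfl⟩⟩, ?_⟩
  obtain ⟨x₀, hx₀⟩ : ∃ x, x ∉ Prod.fst '' K := by
    by_contra hcon
    push_neg at hcon
    have he : Prod.fst '' K = univ := eq_univ_of_forall hcon
    exact hX (isCompact_univ_iff.mp (he ▸ hK.image continuous_fst))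
  obtain ⟨y₀, hy₀⟩ : ∃ y, y ∉ Prod.snd '' K := by
    by_contra hcon
    push_neg at hcon
    have he : Prod.snd '' K = univ := eq_univ_of_forall hcon
    exact hY (isCompact_univ_iff.mp (he ▸ hK.image continuous_snd))
  have h₀ : (x₀, y₀) ∈ ((Prod.fst '' K) ×ˢ (Prod.snd '' K))ᶜ := fun hc => hx₀ hc.1
  apply isPreconnected_of_forall ((x₀, y₀) : X × Y)
  intro p hp
  rw [mem_compl_iff, mem_prod, not_and_or] at hp
  rcases hp with hp1 | hp2
  · refine ⟨({p.1} ×ˢ univ) ∪ (univ ×ˢ {y₀}), ?_, Or.inr ⟨trivial, rfl⟩,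
      Or.inl ⟨rfl, trivial⟩, ?_⟩
    · rintro q (⟨hq1, -⟩ | ⟨-, hq2⟩) hq
      · exact hp1 (by rw [← mem_singleton_iff.mp hq1]; exact hq.1)
      · exact hy₀ (by rw [← mem_singleton_iff.mp hq2]; exact hq.2)
    · exact (isPreconnected_singleton.prod isPreconnected_univ).union (p.1, y₀)
        ⟨rfl, trivial⟩ ⟨trivial, rfl⟩ (isPreconnected_univ.prod isPreconnected_singleton)
  · refine ⟨(univ ×ˢ {p.2}) ∪ ({x₀} ×ˢ univ), ?_, Or.inr ⟨rfl, trivial⟩,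
      Or.inl ⟨trivial, rfl⟩, ?_⟩
    · rintro q (⟨-, hq2⟩ | ⟨hq1, -⟩) hq
      · exact hp2 (by rw [← mem_singleton_iff.mp hq2]; exact hq.2)
      · exact hx₀ (by rw [← mem_singleton_iff.mp hq1]; exact hq.1)
    · exact (isPreconnected_univ.prod isPreconnected_singleton).union (x₀, p.2)
        ⟨trivial, rfl⟩ ⟨rfl, trivial⟩ (isPreconnected_singleton.prod isPreconnected_univ)

/-- If `X` is compact connected and `Y` is a Hausdorff J-space, then `X × Y` is a J-space. -/
lemma isJSpace_prod_of_compact {X Y : Type*} [TopologicalSpace X] [TopologicalSpace Y]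
    [CompactSpace X] [ConnectedSpace X] [T2Space Y] (hY : IsJSpace Y) : IsJSpace (X × Y) := by
  intro A B hA hB hAB hcap
  set K : Set Y := Prod.snd '' (A ∩ B) with hKdef
  have hKc : IsCompact K := hcap.image continuous_snd
  set SA : Set Y := (Prod.snd '' Aᶜ)ᶜ with hSAdef
  set SB : Set Y := (Prod.snd '' Bᶜ)ᶜ with hSBdef
  have hSA_mem : ∀ y, y ∈ SA ↔ ∀ x, (x, y) ∈ A := by
    intro y
    simp only [hSAdef, mem_compl_iff, mem_image, not_exists, not_and, Prod.exists]
    constructor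
    · intro h x
      by_contra hx
      exact h x y hx rfl
    · intro h a b hab heq
      subst heq
      exact hab (h a)
  have hSB_mem : ∀ y, y ∈ SB ↔ ∀ x, (x, y) ∈ B := by
    intro y
    simp only [hSBdef, mem_compl_iff, mem_image, not_exists, not_and, Prod.exists]
    constructor
    · intro h x
      by_contra hx
      exact h x y hx rfl
    · intro h a b hab heq
      subst heq
      exact hab (h a)
  have hSAcl : IsClosed SA := (isOpenMap_snd _ hA.isOpen_compl).isClosed_compl
  have hSBcl : IsClosed SB := (isOpenMap_snd _ hB.isOpen_compl).isClosed_compl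
  -- every point outside K is in SA or SB
  have hcover : ∀ y, y ∉ K → y ∈ SA ∨ y ∈ SB := by
    intro y hyK
    set s : Set X := (fun x => (x, y)) ⁻¹' A with hsdef
    set t : Set X := (fun x => (x, y)) ⁻¹' B with htdef
    have hcont : Continuous (fun x : X => (x, y)) := continuous_id.prodMk continuous_const
    have hscl : IsClosed s := hA.preimage hcont
    have htcl : IsClosed t := hB.preimage hcont
    have hst : s ∪ t = univ := by
      rw [hsdef, htdef, ← preimage_union, hAB, preimage_univ]
    have hst2 : s ∩ t = ∅ := by
      ext x
      simp only [mem_inter_iff, mem_empty_iff_false, iff_false, not_and]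
      intro hxs hxt
      exact hyK ⟨(x, y), ⟨hxs, hxt⟩, rfl⟩
    have hdisj : Disjoint sᶜ tᶜ := by
      rw [disjoint_iff_inter_eq_empty, ← compl_union, hst, compl_univ]
    have hsubs : (univ : Set X) ⊆ sᶜ ∪ tᶜ := by
      rw [← compl_inter, hst2, compl_empty]
    rcases isPreconnected_univ.subset_or_subset hscl.isOpen_compl htcl.isOpen_compl
        hdisj hsubs with h1 | h1
    · -- s empty, so t = univ, so y ∈ SB
      right
      rw [hSB_mem]
      intro x
      have hxs : x ∉ s := h1 trivial
      have : x ∈ s ∪ t := hst ▸ trivial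
      exact this.resolve_left hxs
    · left
      rw [hSA_mem]
      intro x
      have hxt : x ∉ t := h1 trivial
      have : x ∈ s ∪ t := hst ▸ trivial
      exact this.resolve_right hxt
  have hu : (SA ∪ K) ∪ (SB ∪ K) = univ := by
    apply eq_univ_of_forall
    intro y
    by_cases hy : y ∈ K
    · exact Or.inl (Or.inr hy)
    · rcases hcover y hy with h | h
      · exact Or.inl (Or.inl h)
      · exact Or.inr (Or.inl h)
  have hi : (SA ∪ K) ∩ (SB ∪ K) = K := by
    apply Subset.antisymm
    · rintro y ⟨hy1, hy2⟩
      by_contra hyK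
      have hy1' := hy1.resolve_right hyK
      have hy2' := hy2.resolve_right hyK
      obtain ⟨x⟩ : Nonempty X := inferInstance
      exact hyK ⟨(x, y), ⟨(hSA_mem y).mp hy1' x, (hSB_mem y).mp hy2' x⟩, rfl⟩
    · intro y hy
      exact ⟨Or.inr hy, Or.inr hy⟩
  rcases hY (SA ∪ K) (SB ∪ K) (hSAcl.union hKc.isClosed) (hSBcl.union hKc.isClosed) hu
      (by rw [hi]; exact hKc) with h1 | h1
  · left
    have hsub : A ⊆ univ ×ˢ (SA ∪ K) := by
      intro p hpA
      refine ⟨trivial, ?_⟩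
      by_contra hpn
      rw [mem_union, not_or] at hpn
      rcases hcover p.2 hpn.2 with h | h
      · exact hpn.1 h
      · exact hpn.2 ⟨p, ⟨hpA, (hSB_mem p.2).mp h p.1⟩, rfl⟩
    exact (isCompact_univ.prod h1).of_isClosed_subset hA hsub
  · right
    have hsub : B ⊆ univ ×ˢ (SB ∪ K) := by
      intro p hpB
      refine ⟨trivial, ?_⟩
      by_contra hpn
      rw [mem_union, not_or] at hpn
      rcases hcover p.2 hpn.2 with h | h
      · exact hpn.2 ⟨p, ⟨(hSA_mem p.2).mp h p.1, hpB⟩, rfl⟩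
      · exact hpn.1 h
    exact (isCompact_univ.prod h1).of_isClosed_subset hB hsub

/-- If `X × Y` is a J-space and `X` is compact and nonempty, then `Y` is a J-space. -/
lemma isJSpace_factor {X Y : Type*} [TopologicalSpace X] [TopologicalSpace Y]
    [CompactSpace X] [Nonempty X] (h : IsJSpace (X × Y)) : IsJSpace Y := by
  intro A B hA hB hAB hcap
  have hu : ((univ : Set X) ×ˢ A) ∪ ((univ : Set X) ×ˢ B) = (univ : Set (X × Y)) := by
    rw [← prod_union, hAB, univ_prod_univ]
  have hc : IsCompact (((univ : Set X) ×ˢ A) ∩ ((univ : Set X) ×ˢ B)) := by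
    rw [prod_inter_prod, univ_inter]
    exact isCompact_univ.prod hcap
  rcases h ((univ : Set X) ×ˢ A) ((univ : Set X) ×ˢ B) (isClosed_univ.prod hA)
      (isClosed_univ.prod hB) hu hc with
    h1 | h1
  · left
    have := h1.image continuous_snd
    rwa [snd_image_prod univ_nonempty A] at this
  · right
    have := h1.image continuous_snd
    rwa [snd_image_prod univ_nonempty B] at this

/-- For connected Hausdorff spaces `X₁`, `X₂`, the product `X₁ × X₂` is a J-space iff
either both factors are J-spaces or both are non-compact. -/
theorem prod_isJSpace_iff (X₁ X₂ : Type*) [TopologicalSpace X₁] [T2Space X₁]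
    [ConnectedSpace X₁] [TopologicalSpace X₂] [T2Space X₂] [ConnectedSpace X₂] :
    IsJSpace (X₁ × X₂) ↔
      (IsJSpace X₁ ∧ IsJSpace X₂) ∨ (¬CompactSpace X₁ ∧ ¬CompactSpace X₂) := by
  constructor
  · intro h
    by_cases h₁ : CompactSpace X₁
    · exact Or.inl ⟨isJSpace_of_compactSpace, isJSpace_factor h⟩
    · by_cases h₂ : CompactSpace X₂
      · exact Or.inl ⟨isJSpace_factor (h.of_homeomorph (Homeomorph.prodComm X₁ X₂)),
          isJSpace_of_compactSpace⟩
      · exact Or.inr ⟨h₁, h₂⟩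
  · rintro (⟨hJ₁, hJ₂⟩ | ⟨h₁, h₂⟩)
    · by_cases hc₁ : CompactSpace X₁
      · exact isJSpace_prod_of_compact hJ₂
      · by_cases hc₂ : CompactSpace X₂
        · exact (isJSpace_prod_of_compact hJ₁).of_homeomorph (Homeomorph.prodComm X₂ X₁)
        · exact (isStrongJSpace_prod hc₁ hc₂).isJSpace
    · exact (isStrongJSpace_prod h₁ h₂).isJSpace
end

section
/- Let X₁ and X₂ be connected Hausdorff spaces. Then X₁ × X₂ is a strong J-space if and only if either both X₁ and X₂ are strong J-spaces, or both X₁ and X₂ are non-compact. -/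
open Set

lemma isStrongJSpace_of_compactSpace {X : Type*} [TopologicalSpace X] [CompactSpace X] :
    IsStrongJSpace X := fun K _ =>
  ⟨univ, isCompact_univ, subset_univ K, by rw [compl_univ]; exact isPreconnected_empty⟩

lemma isStrongJSpace_of_homeomorph {X Y : Type*} [TopologicalSpace X] [TopologicalSpace Y]
    (e : X ≃ₜ Y) (h : IsStrongJSpace X) : IsStrongJSpace Y := by
  intro K hK
  obtain ⟨L, hL, hKL, hconn⟩ := h (e.symm '' K) (hK.image e.symm.continuous)
  refine ⟨e '' L, hL.image e.continuous, ?_, ?_⟩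
  · intro y hy
    have : e.symm y ∈ L := hKL ⟨y, hy, rfl⟩
    exact ⟨e.symm y, this, e.apply_symm_apply y⟩
  · rw [← Set.image_compl_eq e.bijective]
    exact hconn.image _ e.continuous.continuousOn

/-- If `X₁ × X₂` is a strong J-space and `X₂` is compact (and nonempty), then `X₁` is a
strong J-space. -/
lemma left_strongJ {X₁ X₂ : Type*} [TopologicalSpace X₁] [T2Space X₁]
    [TopologicalSpace X₂] [T2Space X₂] [CompactSpace X₂] [Nonempty X₂]
    (h : IsStrongJSpace (X₁ × X₂)) : IsStrongJSpace X₁ := by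
  intro K hK
  obtain ⟨L, hL, hKL, hconn⟩ := h (K ×ˢ univ) (hK.prod isCompact_univ)
  refine ⟨(Prod.fst '' Lᶜ)ᶜ, ?_, ?_, ?_⟩
  · have hclosed : IsClosed (Prod.fst '' Lᶜ)ᶜ :=
      (isOpenMap_fst _ hL.isClosed.isOpen_compl).isClosed_compl
    refine (hL.image continuous_fst).of_isClosed_subset hclosed ?_
    intro x hx
    obtain ⟨y⟩ := ‹Nonempty X₂›
    have : (x, y) ∈ L := by
      by_contra hxy
      exact hx ⟨(x, y), hxy, rfl⟩
    exact ⟨(x, y), this, rfl⟩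
  · intro x hx
    rintro ⟨⟨x', y⟩, hxy, rfl⟩
    exact hxy (hKL ⟨hx, mem_univ y⟩)
  · rw [compl_compl]
    exact hconn.image _ continuous_fst.continuousOn

/-- The set `(s ×ˢ univ) ∪ (univ ×ˢ {b})` is preconnected when both factors are
preconnected spaces. -/
lemma cross_preconnected {X₁ X₂ : Type*} [TopologicalSpace X₁] [TopologicalSpace X₂]
    [PreconnectedSpace X₁] [PreconnectedSpace X₂] (s : Set X₁) (b : X₂) :
    IsPreconnected (s ×ˢ (univ : Set X₂) ∪ (univ : Set X₁) ×ˢ {b}) := by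
  rcases s.eq_empty_or_nonempty with rfl | ⟨a, ha⟩
  · simpa using isPreconnected_univ.prod isPreconnected_singleton
  · have : s ×ˢ (univ : Set X₂) ∪ (univ : Set X₁) ×ˢ {b} =
        ⋃₀ ((fun x => {x} ×ˢ (univ : Set X₂) ∪ (univ : Set X₁) ×ˢ {b}) '' s) := by
      ext ⟨x, y⟩
      simp only [sUnion_image, mem_iUnion, mem_union, mem_prod, mem_singleton_iff, mem_univ,
        and_true, true_and]
      constructor
      · rintro (hx | hy)
        · exact ⟨x, hx, Or.inl rfl⟩
        · exact ⟨a, ha, Or.inr hy⟩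
      · rintro ⟨x', hx', rfl | hy⟩
        · exact Or.inl hx'
        · exact Or.inr hy
    rw [this]
    apply isPreconnected_sUnion (a, b)
    · rintro t ⟨x, hx, rfl⟩
      exact Or.inr ⟨mem_univ a, rfl⟩
    · rintro t ⟨x, hx, rfl⟩
      apply IsPreconnected.union (x, b)
      · exact ⟨rfl, mem_univ b⟩
      · exact ⟨mem_univ x, rfl⟩
      · exact isPreconnected_singleton.prod isPreconnected_univ
      · exact isPreconnected_univ.prod isPreconnected_singleton

lemma cross_preconnected' {X₁ X₂ : Type*} [TopologicalSpace X₁] [TopologicalSpace X₂]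
    [PreconnectedSpace X₁] [PreconnectedSpace X₂] (t : Set X₂) (a : X₁) :
    IsPreconnected ((univ : Set X₁) ×ˢ t ∪ {a} ×ˢ (univ : Set X₂)) := by
  have h := cross_preconnected t a
  have := h.image (Prod.swap) continuous_swap.continuousOn
  convert this using 1
  rw [Set.image_swap_eq_preimage_swap]
  ext ⟨x, y⟩
  simp only [mem_union, mem_prod, mem_univ, true_and, and_true, mem_singleton_iff,
    mem_preimage, Prod.swap_prod_mk]


/-- For connected Hausdorff spaces `X₁`, `X₂`, the product `X₁ × X₂` is a strong J-space
iff either both factors are strong J-spaces or both are non-compact. -/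
theorem prod_isStrongJSpace_iff (X₁ X₂ : Type*) [TopologicalSpace X₁] [T2Space X₁]
    [ConnectedSpace X₁] [TopologicalSpace X₂] [T2Space X₂] [ConnectedSpace X₂] :
    IsStrongJSpace (X₁ × X₂) ↔
      (IsStrongJSpace X₁ ∧ IsStrongJSpace X₂) ∨ (¬CompactSpace X₁ ∧ ¬CompactSpace X₂) := by
  constructor
  · intro h
    by_cases h1 : CompactSpace X₁
    · left
      refine ⟨isStrongJSpace_of_compactSpace, ?_⟩
      exact left_strongJ (isStrongJSpace_of_homeomorph (Homeomorph.prodComm X₁ X₂) h)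
    · by_cases h2 : CompactSpace X₂
      · left
        exact ⟨left_strongJ h, isStrongJSpace_of_compactSpace⟩
      · right; exact ⟨h1, h2⟩
  · rintro (⟨h1, h2⟩ | ⟨h1, h2⟩) <;> intro K hK
    · obtain ⟨L₁, hL₁, hKL₁, hc₁⟩ := h1 (Prod.fst '' K) (hK.image continuous_fst)
      obtain ⟨L₂, hL₂, hKL₂, hc₂⟩ := h2 (Prod.snd '' K) (hK.image continuous_snd)
      refine ⟨L₁ ×ˢ L₂, hL₁.prod hL₂, ?_, ?_⟩
      · exact fun p hp => ⟨hKL₁ ⟨p, hp, rfl⟩, hKL₂ ⟨p, hp, rfl⟩⟩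
      · rw [compl_prod_eq_union]
        rcases eq_empty_or_nonempty L₁ᶜ with he₁ | ⟨a, ha⟩
        · rw [he₁]; simpa using isPreconnected_univ.prod hc₂
        rcases eq_empty_or_nonempty L₂ᶜ with he₂ | ⟨b, hb⟩
        · rw [he₂]; simpa using hc₁.prod isPreconnected_univ
        apply IsPreconnected.union (a, b)
        · exact ⟨ha, mem_univ b⟩
        · exact ⟨mem_univ a, hb⟩
        · exact hc₁.prod isPreconnected_univ
        · exact isPreconnected_univ.prod hc₂
    · obtain ⟨a, ha⟩ : ((Prod.fst '' K)ᶜ : Set X₁).Nonempty := by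
        rw [nonempty_compl]
        intro hu
        exact h1 ⟨hu ▸ hK.image continuous_fst⟩
      obtain ⟨b, hb⟩ : ((Prod.snd '' K)ᶜ : Set X₂).Nonempty := by
        rw [nonempty_compl]
        intro hu
        exact h2 ⟨hu ▸ hK.image continuous_snd⟩
      refine ⟨(Prod.fst '' K) ×ˢ (Prod.snd '' K),
        (hK.image continuous_fst).prod (hK.image continuous_snd),
        fun p hp => ⟨⟨p, hp, rfl⟩, ⟨p, hp, rfl⟩⟩, ?_⟩
      rw [compl_prod_eq_union]
      have hA := cross_preconnected (Prod.fst '' K)ᶜ b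
      have hB := cross_preconnected' (Prod.snd '' K)ᶜ a
      have key : (Prod.fst '' K)ᶜ ×ˢ (univ : Set X₂) ∪ (univ : Set X₁) ×ˢ (Prod.snd '' K)ᶜ =
          ((Prod.fst '' K)ᶜ ×ˢ (univ : Set X₂) ∪ (univ : Set X₁) ×ˢ {b}) ∪
          ((univ : Set X₁) ×ˢ (Prod.snd '' K)ᶜ ∪ {a} ×ˢ (univ : Set X₂)) := by
        ext ⟨x, y⟩
        simp only [mem_union, mem_prod, mem_univ, true_and, and_true, mem_singleton_iff,
          mem_compl_iff]
        constructor
        · tauto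
        · rintro ((h | rfl) | (h | rfl)) <;> tauto
      rw [key]
      apply IsPreconnected.union (a, b) _ _ hA hB
      · exact Or.inr ⟨mem_univ a, rfl⟩
      · exact Or.inr ⟨rfl, mem_univ b⟩
end

section
/- Let X be a Hausdorff space and let X₁, X₂ be closed subsets of X with X₁ ∪ X₂ = X and X₁ ∩ X₂ compact. Then X is a J-space if and only if both X₁ and X₂ (with their subspace topologies) are J-spaces and at least one of X₁, X₂ is compact. -/
/-- Auxiliary: if `X` is a J-space and `X₁, X₂` is a closed cover with compact
intersection, then `X₁` is a J-space. -/
lemma IsJSpace.of_piece {X : Type*} [TopologicalSpace X] (hJ : IsJSpace X)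
    (X₁ X₂ : Set X) (h₁ : IsClosed X₁) (h₂ : IsClosed X₂) (hu : X₁ ∪ X₂ = Set.univ)
    (hi : IsCompact (X₁ ∩ X₂)) : IsJSpace X₁ := by
  intro A B hA hB hAB hABc
  have emb := h₁.isClosedEmbedding_subtypeVal
  set A' : Set X := Subtype.val '' A with hA'def
  set B' : Set X := Subtype.val '' B with hB'def
  have hA' : IsClosed A' := emb.isClosedMap _ hA
  have hB' : IsClosed B' := emb.isClosedMap _ hB
  have hsubA : A' ⊆ X₁ := by rintro x ⟨a, _, rfl⟩; exact a.2
  have hsubB : B' ⊆ X₁ := by rintro x ⟨b, _, rfl⟩; exact b.2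
  have hunion : A' ∪ B' = X₁ := by
    rw [hA'def, hB'def, ← Set.image_union, hAB, Set.image_univ, Subtype.range_coe]
  have hinter : A' ∩ B' = Subtype.val '' (A ∩ B) :=
    (Set.image_inter Subtype.val_injective).symm
  have hcompAB : IsCompact (A' ∩ B') := by
    rw [hinter]; exact hABc.image continuous_subtype_val
  have := hJ (A' ∪ X₂) B' (hA'.union h₂) hB'
    (by rw [Set.union_right_comm, hunion, hu])
    (by
      rw [Set.union_inter_distrib_right]
      exact hcompAB.union ((hi.of_isClosed_subset (h₂.inter hB')
        (fun x hx => ⟨hsubB hx.2, hx.1⟩))))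
  rcases this with hc | hc
  · left
    have : IsCompact A' := hc.of_isClosed_subset hA' Set.subset_union_left
    exact emb.isEmbedding.isCompact_iff.mpr this
  · right
    exact emb.isEmbedding.isCompact_iff.mpr hc

/-- Auxiliary: if `X₂` is a J-space, `X₁` is compact, and `X₁, X₂` is a closed cover,
then `X` is a J-space. -/
lemma IsJSpace.of_cover {X : Type*} [TopologicalSpace X] (X₁ X₂ : Set X)
    (h₁ : IsClosed X₁) (h₂ : IsClosed X₂) (hu : X₁ ∪ X₂ = Set.univ)
    (hJ₂ : IsJSpace X₂) (hc₁ : IsCompact X₁) : IsJSpace X := by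
  intro A B hA hB hAB hABc
  have emb := h₂.isClosedEmbedding_subtypeVal
  set A₂ : Set X₂ := Subtype.val ⁻¹' A with hA₂def
  set B₂ : Set X₂ := Subtype.val ⁻¹' B with hB₂def
  have him : ∀ S : Set X, Subtype.val '' (Subtype.val ⁻¹' S : Set X₂) = S ∩ X₂ := by
    intro S
    rw [Set.image_preimage_eq_inter_range, Subtype.range_coe]
  have hu' : Subtype.val '' (A₂ ∩ B₂ : Set X₂) = A ∩ B ∩ X₂ := by
    rw [hA₂def, hB₂def, ← Set.preimage_inter, him]
  have := hJ₂ A₂ B₂ (hA.preimage continuous_subtype_val)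
    (hB.preimage continuous_subtype_val)
    (by rw [hA₂def, hB₂def, ← Set.preimage_union, hAB, Set.preimage_univ])
    (by
      rw [emb.isEmbedding.isCompact_iff, hu']
      exact hABc.of_isClosed_subset ((hA.inter hB).inter h₂) Set.inter_subset_left)
  have key : ∀ S : Set X, IsClosed S → IsCompact (Subtype.val ⁻¹' S : Set X₂) →
      IsCompact S := by
    intro S hS hSc
    have h2 : IsCompact (S ∩ X₂) := by
      rw [← him S]; exact hSc.image continuous_subtype_val
    have h1 : IsCompact (S ∩ X₁) :=
      hc₁.of_isClosed_subset (hS.inter h₁) Set.inter_subset_right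
    have : S = S ∩ X₁ ∪ S ∩ X₂ := by
      rw [← Set.inter_union_distrib_left, hu, Set.inter_univ]
    rw [this]; exact h1.union h2
  rcases this with hc | hc
  · exact Or.inl (key A hA hc)
  · exact Or.inr (key B hB hc)

/-- If `{X₁, X₂}` is a closed cover of `X` with `X₁ ∩ X₂` compact, then `X` is a J-space
iff `X₁` and `X₂` are both J-spaces and `X₁` or `X₂` is compact. -/
theorem isJSpace_iff_of_closed_cover {X : Type*} [TopologicalSpace X] [T2Space X]
    (X₁ X₂ : Set X) (h₁ : IsClosed X₁) (h₂ : IsClosed X₂) (hu : X₁ ∪ X₂ = Set.univ)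
    (hi : IsCompact (X₁ ∩ X₂)) :
    IsJSpace X ↔ IsJSpace X₁ ∧ IsJSpace X₂ ∧ (IsCompact X₁ ∨ IsCompact X₂) := by
  constructor
  · intro hJ
    exact ⟨hJ.of_piece X₁ X₂ h₁ h₂ hu hi,
      hJ.of_piece X₂ X₁ h₂ h₁ (by rw [Set.union_comm]; exact hu)
        (by rw [Set.inter_comm]; exact hi),
      hJ X₁ X₂ h₁ h₂ hu hi⟩
  · rintro ⟨hJ₁, hJ₂, hc | hc⟩
    · exact IsJSpace.of_cover X₁ X₂ h₁ h₂ hu hJ₂ hc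
    · exact IsJSpace.of_cover X₂ X₁ h₂ h₁ (by rw [Set.union_comm]; exact hu) hJ₁ hc
end

section
/- Let X be a Hausdorff space and let X₁, X₂ be closed subsets of X with X₁ ∪ X₂ = X and X₁ ∩ X₂ compact. Then X is a strong J-space if and only if both X₁ and X₂ (with their subspace topologies) are strong J-spaces and at least one of X₁, X₂ is compact. -/
/-!
If `X = A ∪ B` with `A`, `B` closed, a compact `L ⊇ A ∩ B` with connected complement must
contain `A` or `B`, because `Lᶜ` is covered by the disjoint open sets `Aᶜ` and `Bᶜ`.
Applied to a witness for `A ∩ B` this makes `A` or `B` compact; applied to a witness for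
`K ∪ (A ∩ B)` with `K ⊆ B`, the set `L ∩ B` is a witness in `B`, since `B \ L` is either
`Lᶜ` or empty. Conversely, if `A` is compact and `L ⊆ B` is a witness in `B` for
`(K ∪ A) ∩ B`, then `A ∪ L` is a witness for `K` in `X`, with complement `B \ L`.
-/

open Set Topology

section

variable {X : Type*} [TopologicalSpace X]

lemma subset_or_subset_of_isPreconnected_compl {A B L : Set X} (hA : IsClosed A)
    (hB : IsClosed B) (hu : A ∪ B = univ) (hL : A ∩ B ⊆ L) (hconn : IsPreconnected Lᶜ) :
    A ⊆ L ∨ B ⊆ L := by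
  have hdisj : Disjoint Aᶜ Bᶜ := by
    rw [disjoint_iff_inter_eq_empty, ← compl_union, hu, compl_univ]
  have hcover : Lᶜ ⊆ Aᶜ ∪ Bᶜ := by
    rw [← compl_inter]
    exact compl_subset_compl.mpr hL
  simpa only [compl_subset_compl] using
    hconn.subset_or_subset hA.isOpen_compl hB.isOpen_compl hdisj hcover

lemma isStrongJSpace_subtype_iff {s : Set X} :
    IsStrongJSpace s ↔ ∀ K ⊆ s, IsCompact K →
      ∃ L ⊆ s, IsCompact L ∧ K ⊆ L ∧ IsPreconnected (s \ L) := by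
  have hcompl (L : Set s) : ((↑) : s → X) '' Lᶜ = s \ (↑) '' L := by
    rw [image_compl_eq_range_sdiff_image Subtype.val_injective, Subtype.range_coe]
  constructor
  · intro hs K hKs hK
    have hK' : IsCompact (((↑) : s → X) ⁻¹' K) := by
      rwa [IsEmbedding.subtypeVal.isCompact_iff, Subtype.image_preimage_coe,
        inter_eq_right.mpr hKs]
    obtain ⟨L, hL, hKL, hconn⟩ := hs _ hK'
    refine ⟨(↑) '' L, image_subset_range _ _ |>.trans Subtype.range_coe.subset,
      hL.image continuous_subtype_val, ?_, ?_⟩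
    · intro x hx
      exact ⟨⟨x, hKs hx⟩, hKL hx, rfl⟩
    · rw [← hcompl]
      exact hconn.image _ continuous_subtype_val.continuousOn
  · intro hs K hK
    obtain ⟨L, hLs, hL, hKL, hconn⟩ :=
      hs _ (image_subset_range _ _ |>.trans Subtype.range_coe.subset)
        (hK.image continuous_subtype_val)
    have hLimage : ((↑) : s → X) '' ((↑) ⁻¹' L) = L := by
      rw [Subtype.image_preimage_coe, inter_eq_right.mpr hLs]
    refine ⟨(↑) ⁻¹' L, ?_, fun x hx => hKL ⟨x, hx, rfl⟩, ?_⟩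
    · rwa [IsEmbedding.subtypeVal.isCompact_iff, hLimage]
    · rwa [← IsInducing.subtypeVal.isPreconnected_image, hcompl, hLimage]

lemma IsStrongJSpace.isJSpace_s18 (hX : IsStrongJSpace X) : IsJSpace X := by
  intro A B hA hB hu hi
  obtain ⟨L, hL, hiL, hconn⟩ := hX _ hi
  exact (subset_or_subset_of_isPreconnected_compl hA hB hu hiL hconn).imp
    (hL.of_isClosed_subset hA) (hL.of_isClosed_subset hB)

lemma IsStrongJSpace.subtype_of_closed_cover (hX : IsStrongJSpace X) {A B : Set X}
    (hA : IsClosed A) (hB : IsClosed B) (hu : A ∪ B = univ) (hi : IsCompact (A ∩ B)) :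
    IsStrongJSpace B := by
  refine isStrongJSpace_subtype_iff.mpr fun K hKB hK => ?_
  obtain ⟨L, hL, hKL, hconn⟩ := hX _ (hK.union hi)
  refine ⟨L ∩ B, inter_subset_right, hL.inter_right hB,
    subset_inter (subset_union_left.trans hKL) hKB, ?_⟩
  rw [sdiff_inter_self_eq_sdiff]
  rcases subset_or_subset_of_isPreconnected_compl hA hB hu
    (subset_union_right.trans hKL) hconn with hAL | hBL
  · have hLB : Lᶜ ⊆ B := (compl_subset_compl.mpr hAL).trans (compl_subset_iff_union.mpr hu)
    rwa [sdiff_eq, inter_eq_right.mpr hLB]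
  · rw [sdiff_eq_empty.mpr hBL]
    exact isPreconnected_empty

lemma isStrongJSpace_of_closed_cover_of_isCompact {A B : Set X} (hB : IsClosed B)
    (hu : A ∪ B = univ) (hA : IsCompact A) (hBJ : IsStrongJSpace B) :
    IsStrongJSpace X := by
  intro K hK
  obtain ⟨L, hLB, hL, hKAL, hconn⟩ :=
    isStrongJSpace_subtype_iff.mp hBJ ((K ∪ A) ∩ B) inter_subset_right
      ((hK.union hA).inter_right hB)
  have hAB : Aᶜ ⊆ B := compl_subset_iff_union.mpr hu
  refine ⟨A ∪ L, hA.union hL, fun x hxK => ?_, ?_⟩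
  · by_cases hxA : x ∈ A
    · exact Or.inl hxA
    · exact Or.inr (hKAL ⟨Or.inl hxK, hAB hxA⟩)
  · convert hconn using 1
    ext x
    simp only [compl_union, mem_inter_iff, mem_compl_iff, mem_sdiff]
    constructor
    · rintro ⟨hxA, hxL⟩
      exact ⟨hAB hxA, hxL⟩
    · rintro ⟨hxB, hxL⟩
      exact ⟨fun hxA => hxL (hKAL ⟨Or.inr hxA, hxB⟩), hxL⟩

end

theorem isStrongJSpace_iff_of_closed_cover_general {X : Type*} [TopologicalSpace X]
    (X₁ X₂ : Set X) (h₁ : IsClosed X₁) (h₂ : IsClosed X₂) (hu : X₁ ∪ X₂ = Set.univ)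
    (hi : IsCompact (X₁ ∩ X₂)) :
    IsStrongJSpace X ↔
      IsStrongJSpace X₁ ∧ IsStrongJSpace X₂ ∧ (IsCompact X₁ ∨ IsCompact X₂) := by
  have hu' : X₂ ∪ X₁ = univ := union_comm X₂ X₁ ▸ hu
  constructor
  · intro hX
    exact ⟨hX.subtype_of_closed_cover h₂ h₁ hu' (inter_comm X₁ X₂ ▸ hi),
      hX.subtype_of_closed_cover h₁ h₂ hu hi, hX.isJSpace_s18 X₁ X₂ h₁ h₂ hu hi⟩
  · rintro ⟨hJ₁, hJ₂, hc₁ | hc₂⟩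
    · exact isStrongJSpace_of_closed_cover_of_isCompact h₂ hu hc₁ hJ₂
    · exact isStrongJSpace_of_closed_cover_of_isCompact h₁ hu' hc₂ hJ₁

/-- If `{X₁, X₂}` is a closed cover of `X` with `X₁ ∩ X₂` compact, then `X` is a strong
J-space iff `X₁` and `X₂` are both strong J-spaces and `X₁` or `X₂` is compact. -/
theorem isStrongJSpace_iff_of_closed_cover {X : Type*} [TopologicalSpace X] [T2Space X]
    (X₁ X₂ : Set X) (h₁ : IsClosed X₁) (h₂ : IsClosed X₂) (hu : X₁ ∪ X₂ = Set.univ)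
    (hi : IsCompact (X₁ ∩ X₂)) :
    IsStrongJSpace X ↔
      IsStrongJSpace X₁ ∧ IsStrongJSpace X₂ ∧ (IsCompact X₁ ∨ IsCompact X₂) :=
  isStrongJSpace_iff_of_closed_cover_general X₁ X₂ h₁ h₂ hu hi
end

section
/- If X is a Hausdorff strong J-space, then every connected component of X (with the subspace topology) is a strong J-space. -/
/-- Every connected component of a strong J-space is a strong J-space. -/
theorem connectedComponent_isStrongJSpace {X : Type*} [TopologicalSpace X] [T2Space X]
    (h : IsStrongJSpace X) (x : X) : IsStrongJSpace (connectedComponent x) := by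
  intro K hK
  obtain ⟨L, hL, hKL, hpre⟩ := h (Subtype.val '' K) (hK.image continuous_subtype_val)
  refine ⟨Subtype.val ⁻¹' L, ?_, fun k hk => hKL ⟨k, hk, rfl⟩, ?_⟩
  · rw [Topology.IsEmbedding.subtypeVal.isCompact_iff, Subtype.image_preimage_coe]
    exact hL.inter_left isClosed_connectedComponent
  · rw [← Topology.IsInducing.subtypeVal.isPreconnected_image]
    have himg : Subtype.val '' ((Subtype.val ⁻¹' L : Set (connectedComponent x))ᶜ) = connectedComponent x ∩ Lᶜ := by
      rw [← Set.preimage_compl, Subtype.image_preimage_coe]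
    rw [himg]
    rcases Set.eq_empty_or_nonempty Lᶜ with he | ⟨y, hy⟩
    · rw [he, Set.inter_empty]; exact isPreconnected_empty
    · rcases eq_or_ne (connectedComponent y) (connectedComponent x) with heq | hne
      · have : Lᶜ ⊆ connectedComponent x := heq ▸ hpre.subset_connectedComponent hy
        rw [Set.inter_eq_self_of_subset_right this]; exact hpre
      · have hdisj : Disjoint (connectedComponent x) Lᶜ := by
          refine Set.disjoint_left.mpr fun z hz hz' => hne ?_
          have h1 : z ∈ connectedComponent y := hpre.subset_connectedComponent hy hz'
          have e1 : connectedComponent y = connectedComponent z := connectedComponent_eq h1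
          have e2 : connectedComponent x = connectedComponent z := connectedComponent_eq hz
          exact e1.trans e2.symm
        rw [Set.disjoint_iff_inter_eq_empty.mp hdisj]; exact isPreconnected_empty
end
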